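/- arXiv:2503.11821 — 3 statements merged into one kernel-verified Lean document; each statement's English description precedes it below -/
import Mathlib

section
/- For every real number q ∈ [0,1], the q-quantile stable mechanism φ^q is not obviously manipulable if and only if q = 0 (i.e., if and only if φ^q is the doctor-proposing deferred-acceptance mechanism, which always selects the doctor-optimal stable allocation). -/
/-- A one-to-one matching market with contracts: a finite set `X` of contracts,
finite sets `D` of doctors and `H` of hospitals, maps assigning to each contract
its doctor and its hospital, and fixed, publicly known hospital preferences
(strict linear orders over the hospital's contracts together with `none` = ∅). -/
structure Market where
  X : Type
  D : Type
  H : Type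
  [fintypeX : Fintype X]
  [fintypeD : Fintype D]
  [fintypeH : Fintype H]
  [decEqX : DecidableEq X]
  [decEqD : DecidableEq D]
  [decEqH : DecidableEq H]
  doc : X → D
  hos : X → H
  hpref : ∀ h : H, LinearOrder (Option {x : X // hos x = h})

attribute [instance] Market.fintypeX Market.fintypeD Market.fintypeH
attribute [instance] Market.decEqX Market.decEqD Market.decEqH

namespace Market

variable (M : Market)

/-- The contracts involving doctor `d`. -/
abbrev Xd (d : M.D) : Type := {x : M.X // M.doc x = d}

/-- The contracts involving hospital `h`. -/
abbrev Xh (h : M.H) : Type := {x : M.X // M.hos x = h}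

/-- A (strict) preference for doctor `d`: a linear order on `X_d ∪ {∅}`,
where `none` plays the role of ∅ and "larger" means "more preferred". -/
abbrev DocPref (d : M.D) : Type := LinearOrder (Option (M.Xd d))

/-- A profile of doctor preferences. -/
abbrev Prof : Type := ∀ d : M.D, M.DocPref d

/-- `Y` is an allocation: distinct contracts of `Y` involve distinct doctors and
distinct hospitals. -/
def IsAllocation (Y : Finset M.X) : Prop :=
  ∀ x ∈ Y, ∀ y ∈ Y, x ≠ y → M.doc x ≠ M.doc y ∧ M.hos x ≠ M.hos y

/-- `Y_d`: the contract of `Y` involving doctor `d` (there is a unique one when `Y`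
is an allocation), or `none` (= ∅) if there is none. -/
noncomputable def allocD (Y : Finset M.X) (d : M.D) : Option (M.Xd d) :=
  if h : ∃ x ∈ Y, M.doc x = d then some ⟨h.choose, h.choose_spec.2⟩ else none

/-- `Y_h`: the contract of `Y` involving hospital `h`, or `none` (= ∅) if there is none. -/
noncomputable def allocH (Y : Finset M.X) (h : M.H) : Option (M.Xh h) :=
  if hh : ∃ x ∈ Y, M.hos x = h then some ⟨hh.choose, hh.choose_spec.2⟩ else none

/-- Individual rationality: every agent weakly prefers its assignment to ∅. -/
def IndividuallyRational (P : M.Prof) (Y : Finset M.X) : Prop :=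
  (∀ d : M.D, (P d).le none (M.allocD Y d)) ∧
  (∀ h : M.H, (M.hpref h).le none (M.allocH Y h))

/-- Contract `x` blocks `Y`: `x ∉ Y` and both the doctor and the hospital of `x`
strictly prefer `x` to their assignment under `Y`. -/
def Blocks (P : M.Prof) (Y : Finset M.X) (x : M.X) : Prop :=
  x ∉ Y ∧ (P (M.doc x)).lt (M.allocD Y (M.doc x)) (some ⟨x, rfl⟩) ∧
    (M.hpref (M.hos x)).lt (M.allocH Y (M.hos x)) (some ⟨x, rfl⟩)

/-- `Y` is stable: it is an individually rational allocation and no contract blocks it. -/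
def IsStable (P : M.Prof) (Y : Finset M.X) : Prop :=
  M.IsAllocation Y ∧ M.IndividuallyRational P Y ∧ ∀ x : M.X, ¬ M.Blocks P Y x

/-- A (matching) mechanism: a map from doctor-preference profiles to sets of contracts. -/
abbrev Mech : Type := M.Prof → Finset M.X

/-- `φ_d(P)`: the contract assigned to doctor `d` by mechanism `φ` at profile `P`. -/
noncomputable def assign (φ : M.Mech) (P : M.Prof) (d : M.D) : Option (M.Xd d) :=
  M.allocD (φ P) d

/-- `Pd'` is a manipulation of `φ` at true preference `Pd` for doctor `d`:
for some subprofile of the other doctors, reporting `Pd'` yields an outcome that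
`d` strictly prefers (under the true `Pd`) to the outcome from reporting `Pd`. -/
def IsManipulation (φ : M.Mech) (d : M.D) (Pd Pd' : M.DocPref d) : Prop :=
  ∃ P : M.Prof,
    Pd.lt (M.assign φ (Function.update P d Pd) d) (M.assign φ (Function.update P d Pd') d)

/-- `φ` is non-manipulable (strategy-proof). -/
def NonManipulable (φ : M.Mech) : Prop :=
  ∀ (d : M.D) (Pd Pd' : M.DocPref d), ¬ M.IsManipulation φ d Pd Pd'

/-- The option set `O^φ(Pd)` left open by report `Pd` of doctor `d`. -/
def optionSet (φ : M.Mech) (d : M.D) (Pd : M.DocPref d) : Set (Option (M.Xd d)) :=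
  {o | ∃ P : M.Prof, o = M.assign φ (Function.update P d Pd) d}

/-- `a` is the `Pd`-worst element of `S` (i.e. `a = W_d(Pd, S)`). -/
def IsWorst (d : M.D) (Pd : M.DocPref d) (S : Set (Option (M.Xd d)))
    (a : Option (M.Xd d)) : Prop :=
  a ∈ S ∧ ∀ b ∈ S, Pd.le a b

/-- `a` is the `Pd`-best element of `S` (i.e. `a = C_d(Pd, S)`). -/
def IsBest (d : M.D) (Pd : M.DocPref d) (S : Set (Option (M.Xd d)))
    (a : Option (M.Xd d)) : Prop :=
  a ∈ S ∧ ∀ b ∈ S, Pd.le b a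

/-- `Pd'` is an obvious manipulation of `φ` at `Pd`: it is a manipulation and either
`W_d(Pd, O^φ(Pd')) P_d W_d(Pd, O^φ(Pd))` or `C_d(Pd, O^φ(Pd')) P_d C_d(Pd, O^φ(Pd))`. -/
def IsObviousManipulation (φ : M.Mech) (d : M.D) (Pd Pd' : M.DocPref d) : Prop :=
  M.IsManipulation φ d Pd Pd' ∧
    ((∃ a b, M.IsWorst d Pd (M.optionSet φ d Pd') a ∧
        M.IsWorst d Pd (M.optionSet φ d Pd) b ∧ Pd.lt b a) ∨
     (∃ a b, M.IsBest d Pd (M.optionSet φ d Pd') a ∧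
        M.IsBest d Pd (M.optionSet φ d Pd) b ∧ Pd.lt b a))

/-- `φ` is not obviously manipulable (NOM). -/
def NOM (φ : M.Mech) : Prop :=
  ∀ (d : M.D) (Pd Pd' : M.DocPref d), ¬ M.IsObviousManipulation φ d Pd Pd'

open Classical in
/-- The (finite) set of all stable allocations at profile `P`. -/
noncomputable def stableSet (P : M.Prof) : Finset (Finset M.X) :=
  @Finset.filter _ (fun Y => M.IsStable P Y) (Classical.decPred _) Finset.univ

/-- The list of doctor `d`'s assignments across all stable allocations at `P`
(with multiplicity), ordered from best to worst according to `P d`. -/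
noncomputable def sortedStable (P : M.Prof) (d : M.D) : List (Option (M.Xd d)) :=
  letI := P d
  ((M.stableSet P).val.map (fun Y => M.allocD Y d)).sort (· ≥ ·)

/-- `X^{(j)}_d`: doctor `d`'s `j`-th best stable assignment at `P` (for `1 ≤ j ≤ k`,
`k` the number of stable allocations). -/
noncomputable def nthBest (P : M.Prof) (d : M.D) (j : ℕ) : Option (M.Xd d) :=
  ((M.sortedStable P d)[j - 1]?).join

/-- The `j`-th quantile stable allocation `X^{(j)} = ⋃_{d ∈ D} X^{(j)}_d` at `P`. -/
noncomputable def quantileAlloc (P : M.Prof) (j : ℕ) : Finset M.X :=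
  Finset.univ.filter (fun x => M.nthBest P (M.doc x) j = some ⟨x, rfl⟩)

/-- The `q`-quantile stable mechanism `φ^q`: at a profile with `k` stable allocations
it selects the `⌈kq⌉`-th quantile stable allocation (with `⌈0⌉` taken to be `1`). -/
noncomputable def quantileMech (q : ℝ) : M.Mech :=
  fun P => M.quantileAlloc P (max 1 ⌈((M.stableSet P).card : ℝ) * q⌉₊)

/-- `Y` is the doctor-optimal stable allocation at `P`: it is stable and every doctor
weakly prefers it to every other stable allocation. -/
def IsDoctorOptimal (P : M.Prof) (Y : Finset M.X) : Prop :=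
  M.IsStable P Y ∧
    ∀ Z : Finset M.X, M.IsStable P Z → ∀ d : M.D, (P d).le (M.allocD Z d) (M.allocD Y d)

/-- `Y` is the hospital-optimal stable allocation at `P`. -/
def IsHospitalOptimal (P : M.Prof) (Y : Finset M.X) : Prop :=
  M.IsStable P Y ∧
    ∀ Z : Finset M.X, M.IsStable P Z → ∀ h : M.H, (M.hpref h).le (M.allocH Z h) (M.allocH Y h)

end Market

namespace Market

variable {M : Market}

/-! ### casts between hospital-indexed option types -/

def ocast {h h' : M.H} (e : h = h') (o : Option (M.Xh h)) : Option (M.Xh h') := e ▸ o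

@[simp] lemma ocast_rfl {h : M.H} (o : Option (M.Xh h)) : ocast rfl o = o := rfl

lemma ocast_some {h h' : M.H} (e : h = h') (u : M.Xh h) :
    ocast e (some u) = some ⟨u.1, e ▸ u.2⟩ := by subst e; rfl

lemma ocast_none {h h' : M.H} (e : h = h') : ocast e (none : Option (M.Xh h)) = none := by
  subst e; rfl

lemma allocH_ocast (Y : Finset M.X) {h h' : M.H} (e : h = h') :
    M.allocH Y h' = ocast e (M.allocH Y h) := by subst e; rfl

lemma hpref_lt_ocast {h h' : M.H} (e : h = h') {a b : Option (M.Xh h)} :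
    (M.hpref h').lt (ocast e a) (ocast e b) ↔ (M.hpref h).lt a b := by subst e; rfl

lemma hpref_le_ocast {h h' : M.H} (e : h = h') {a b : Option (M.Xh h)} :
    (M.hpref h').le (ocast e a) (ocast e b) ↔ (M.hpref h).le a b := by subst e; rfl

/-! ### helper lemmas about `allocD` / `allocH` -/

lemma allocD_eq_some {Y : Finset M.X} {d : M.D} {x : M.X} (hx : x ∈ Y) (hd : M.doc x = d)
    (huniq : ∀ y ∈ Y, M.doc y = d → y = x) : M.allocD Y d = some ⟨x, hd⟩ := by
  have hex : ∃ z ∈ Y, M.doc z = d := ⟨x, hx, hd⟩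
  rw [allocD, dif_pos hex]
  have := hex.choose_spec
  have hxx : hex.choose = x := huniq _ this.1 this.2
  exact congrArg some (Subtype.ext hxx)

lemma allocD_eq_none {Y : Finset M.X} {d : M.D} (h : ∀ y ∈ Y, M.doc y ≠ d) :
    M.allocD Y d = none := by
  rw [allocD, dif_neg]
  rintro ⟨z, hz, hzd⟩
  exact h z hz hzd

lemma allocH_eq_some {Y : Finset M.X} {h : M.H} {x : M.X} (hx : x ∈ Y) (hd : M.hos x = h)
    (huniq : ∀ y ∈ Y, M.hos y = h → y = x) : M.allocH Y h = some ⟨x, hd⟩ := by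
  have hex : ∃ z ∈ Y, M.hos z = h := ⟨x, hx, hd⟩
  rw [allocH, dif_pos hex]
  have := hex.choose_spec
  have hxx : hex.choose = x := huniq _ this.1 this.2
  exact congrArg some (Subtype.ext hxx)

lemma allocH_eq_none {Y : Finset M.X} {h : M.H} (hh : ∀ y ∈ Y, M.hos y ≠ h) :
    M.allocH Y h = none := by
  rw [allocH, dif_neg]
  rintro ⟨z, hz, hzd⟩
  exact hh z hz hzd

lemma allocD_mem_of_alloc {Y : Finset M.X} (hY : M.IsAllocation Y) {x : M.X} (hx : x ∈ Y) :
    M.allocD Y (M.doc x) = some ⟨x, rfl⟩ :=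
  allocD_eq_some hx rfl (fun y hy hyd => by
    by_contra hne
    exact (hY y hy x hx hne).1 hyd)

lemma allocH_mem_of_alloc {Y : Finset M.X} (hY : M.IsAllocation Y) {x : M.X} (hx : x ∈ Y) :
    M.allocH Y (M.hos x) = some ⟨x, rfl⟩ :=
  allocH_eq_some hx rfl (fun y hy hyd => by
    by_contra hne
    exact (hY y hy x hx hne).2 hyd)

lemma allocD_some_mem {Y : Finset M.X} {d : M.D} {u : M.Xd d} (h : M.allocD Y d = some u) :
    u.1 ∈ Y := by
  by_cases hex : ∃ z ∈ Y, M.doc z = d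
  · rw [allocD, dif_pos hex] at h
    obtain ⟨rfl⟩ : (⟨hex.choose, hex.choose_spec.2⟩ : M.Xd d) = u := by
      exact Option.some_injective _ h
    exact hex.choose_spec.1
  · rw [allocD, dif_neg hex] at h
    exact absurd h (by simp)

lemma allocH_some_mem {Y : Finset M.X} {h : M.H} {u : M.Xh h} (hh : M.allocH Y h = some u) :
    u.1 ∈ Y := by
  by_cases hex : ∃ z ∈ Y, M.hos z = h
  · rw [allocH, dif_pos hex] at hh
    obtain ⟨rfl⟩ : (⟨hex.choose, hex.choose_spec.2⟩ : M.Xh h) = u := by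
      exact Option.some_injective _ hh
    exact hex.choose_spec.1
  · rw [allocH, dif_neg hex] at hh
    exact absurd hh (by simp)

end Market

namespace Market

variable {M : Market}

/-! ### Deferred acceptance -/

open Classical in
/-- Doctor `e`'s candidate options, given the set `S` of not-yet-rejected contracts:
`none`, together with every contract of `e` in `S` that `e` finds acceptable. -/
noncomputable def cand (P : M.Prof) (S : Finset M.X) (e : M.D) : Finset (Option (M.Xd e)) :=
  @Finset.filter _
    (fun o => (P e).le none o ∧ ∀ x : M.Xd e, o = some x → x.1 ∈ S)
    (Classical.decPred _) Finset.univ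

lemma mem_cand {P : M.Prof} {S : Finset M.X} {e : M.D} {o : Option (M.Xd e)} :
    o ∈ cand P S e ↔ (P e).le none o ∧ ∀ x : M.Xd e, o = some x → x.1 ∈ S := by
  simp [cand]

lemma none_mem_cand (P : M.Prof) (S : Finset M.X) (e : M.D) :
    (none : Option (M.Xd e)) ∈ cand P S e :=
  mem_cand.2 ⟨(P e).le_refl none, by simp⟩

lemma cand_nonempty (P : M.Prof) (S : Finset M.X) (e : M.D) : (cand P S e).Nonempty :=
  ⟨none, none_mem_cand P S e⟩

/-- Doctor `e`'s proposal given remaining set `S`: the best candidate. -/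
noncomputable def propose (P : M.Prof) (S : Finset M.X) (e : M.D) : Option (M.Xd e) :=
  letI := P e
  (cand P S e).max' (cand_nonempty P S e)

lemma propose_mem_cand (P : M.Prof) (S : Finset M.X) (e : M.D) :
    propose P S e ∈ cand P S e := by
  letI := P e
  exact (cand P S e).max'_mem _

lemma le_propose {P : M.Prof} {S : Finset M.X} {e : M.D} {o : Option (M.Xd e)}
    (ho : o ∈ cand P S e) : (P e).le o (propose P S e) := by
  letI := P e
  exact Finset.le_max' _ o ho

lemma none_le_propose (P : M.Prof) (S : Finset M.X) (e : M.D) :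
    (P e).le none (propose P S e) :=
  le_propose (none_mem_cand P S e)

lemma propose_some_mem {P : M.Prof} {S : Finset M.X} {e : M.D} {x : M.Xd e}
    (h : propose P S e = some x) : x.1 ∈ S := by
  have := propose_mem_cand P S e
  rw [h, mem_cand] at this
  exact this.2 x rfl

lemma cand_mono {P : M.Prof} {S T : Finset M.X} (hST : S ⊆ T) (e : M.D) :
    cand P S e ⊆ cand P T e := by
  intro o ho
  rw [mem_cand] at ho ⊢
  exact ⟨ho.1, fun x hx => hST (ho.2 x hx)⟩

lemma propose_mono {P : M.Prof} {S T : Finset M.X} (hST : S ⊆ T) (e : M.D) :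
    (P e).le (propose P S e) (propose P T e) := by
  letI := P e
  exact Finset.max'_subset _ (cand_mono hST e)

open Classical in
/-- The options received by hospital `h`: `none` together with the `h`-acceptable
contracts currently proposed by their doctors. -/
noncomputable def recvd (P : M.Prof) (S : Finset M.X) (h : M.H) : Finset (Option (M.Xh h)) :=
  @Finset.filter _
    (fun o => (M.hpref h).le none o ∧
      ∀ y : M.Xh h, o = some y → propose P S (M.doc y.1) = some ⟨y.1, rfl⟩)
    (Classical.decPred _) Finset.univ

lemma mem_recvd {P : M.Prof} {S : Finset M.X} {h : M.H} {o : Option (M.Xh h)} :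
    o ∈ recvd P S h ↔ (M.hpref h).le none o ∧
      ∀ y : M.Xh h, o = some y → propose P S (M.doc y.1) = some ⟨y.1, rfl⟩ := by
  simp [recvd]

lemma none_mem_recvd (P : M.Prof) (S : Finset M.X) (h : M.H) :
    (none : Option (M.Xh h)) ∈ recvd P S h :=
  mem_recvd.2 ⟨(M.hpref h).le_refl none, by simp⟩

/-- The contract held by hospital `h`. -/
noncomputable def held (P : M.Prof) (S : Finset M.X) (h : M.H) : Option (M.Xh h) :=
  letI := M.hpref h
  (recvd P S h).max' ⟨none, none_mem_recvd P S h⟩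

lemma held_mem_recvd (P : M.Prof) (S : Finset M.X) (h : M.H) :
    held P S h ∈ recvd P S h := by
  letI := M.hpref h
  exact (recvd P S h).max'_mem _

lemma le_held {P : M.Prof} {S : Finset M.X} {h : M.H} {o : Option (M.Xh h)}
    (ho : o ∈ recvd P S h) : (M.hpref h).le o (held P S h) := by
  letI := M.hpref h
  exact Finset.le_max' _ o ho

lemma none_le_held (P : M.Prof) (S : Finset M.X) (h : M.H) :
    (M.hpref h).le none (held P S h) :=
  le_held (none_mem_recvd P S h)

/-- `x` is rejected in the current round. -/
@[reducible] def rejected (P : M.Prof) (S : Finset M.X) (x : M.X) : Prop :=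
  propose P S (M.doc x) = some ⟨x, rfl⟩ ∧ held P S (M.hos x) ≠ some ⟨x, rfl⟩

/-- One round of deferred acceptance: delete rejected contracts. -/
noncomputable def step (P : M.Prof) (S : Finset M.X) : Finset M.X :=
  S.filter (fun x => ¬ rejected P S x)

lemma mem_step {P : M.Prof} {S : Finset M.X} {x : M.X} :
    x ∈ step P S ↔ x ∈ S ∧ ¬ rejected P S x := by
  rw [step, Finset.mem_filter]

lemma step_subset (P : M.Prof) (S : Finset M.X) : step P S ⊆ S :=
  Finset.filter_subset _ _

/-- The state after `k` rounds. -/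
noncomputable def state (P : M.Prof) (k : ℕ) : Finset M.X :=
  (step P)^[k] Finset.univ

lemma state_succ (P : M.Prof) (k : ℕ) : state P (k + 1) = step P (state P k) := by
  rw [state, Function.iterate_succ_apply', state]

lemma state_succ_subset (P : M.Prof) (k : ℕ) : state P (k + 1) ⊆ state P k := by
  rw [state_succ]; exact step_subset _ _

lemma state_anti (P : M.Prof) {j k : ℕ} (hjk : j ≤ k) : state P k ⊆ state P j := by
  induction k with
  | zero => simp_all
  | succ n ih =>
    rcases Nat.lt_or_ge j (n+1) with hlt | hge
    · exact (state_succ_subset P n).trans (ih (Nat.lt_succ_iff.mp hlt))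
    · have : j = n + 1 := le_antisymm hjk hge
      subst this; rfl

end Market

namespace Market

variable {M : Market}

/-! ### casts between doctor-indexed option types -/

def dcast {d d' : M.D} (e : d = d') (o : Option (M.Xd d)) : Option (M.Xd d') := e ▸ o

lemma dcast_some {d d' : M.D} (e : d = d') (u : M.Xd d) :
    dcast e (some u) = some ⟨u.1, e ▸ u.2⟩ := by subst e; rfl

lemma dcast_none {d d' : M.D} (e : d = d') : dcast e (none : Option (M.Xd d)) = none := by
  subst e; rfl

lemma dcast_inj {d d' : M.D} (e : d = d') {a b : Option (M.Xd d)}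
    (h : dcast e a = dcast e b) : a = b := by subst e; exact h

lemma allocD_dcast (Y : Finset M.X) {d d' : M.D} (e : d = d') :
    M.allocD Y d' = dcast e (M.allocD Y d) := by subst e; rfl

lemma propose_dcast (P : M.Prof) (S : Finset M.X) {d d' : M.D} (e : d = d') :
    propose P S d' = dcast e (propose P S d) := by subst e; rfl

lemma ppref_lt_dcast (P : M.Prof) {d d' : M.D} (e : d = d') {a b : Option (M.Xd d)} :
    (P d').lt (dcast e a) (dcast e b) ↔ (P d).lt a b := by subst e; rfl

lemma ppref_le_dcast (P : M.Prof) {d d' : M.D} (e : d = d') {a b : Option (M.Xd d)} :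
    (P d').le (dcast e a) (dcast e b) ↔ (P d).le a b := by subst e; rfl

lemma held_ocast (P : M.Prof) (S : Finset M.X) {h h' : M.H} (e : h = h') :
    held P S h' = ocast e (held P S h) := by subst e; rfl

/-! ### Monotonicity across rounds -/

/-- A proposed-and-held contract is proposed again after one round. -/
lemma propose_step_of_held {P : M.Prof} {S : Finset M.X} {x : M.X}
    (hprop : propose P S (M.doc x) = some ⟨x, rfl⟩)
    (hheld : held P S (M.hos x) = some ⟨x, rfl⟩) :
    propose P (step P S) (M.doc x) = some ⟨x, rfl⟩ := by
  have hnotrej : ¬ rejected P S x := by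
    rintro ⟨-, hrej2⟩; exact hrej2 hheld
  have hxS : x ∈ S := propose_some_mem hprop
  have hxstep : x ∈ step P S := mem_step.2 ⟨hxS, hnotrej⟩
  have hacc : (P (M.doc x)).le none (some ⟨x, rfl⟩) := by
    have := propose_mem_cand P S (M.doc x)
    rw [hprop, mem_cand] at this
    exact this.1
  have hmem : (some ⟨x, rfl⟩ : Option (M.Xd (M.doc x))) ∈ cand P (step P S) (M.doc x) :=
    mem_cand.2 ⟨hacc, fun z hz => by
      obtain ⟨rfl⟩ : (⟨x, rfl⟩ : M.Xd (M.doc x)) = z := Option.some_injective _ hz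
      exact hxstep⟩
  have h1 : (P (M.doc x)).le (some ⟨x, rfl⟩) (propose P (step P S) (M.doc x)) :=
    le_propose hmem
  have h2 : (P (M.doc x)).le (propose P (step P S) (M.doc x)) (propose P S (M.doc x)) :=
    propose_mono (step_subset P S) (M.doc x)
  rw [hprop] at h2
  exact (P (M.doc x)).le_antisymm _ _ h2 h1

/-- Hospitals' holdings improve weakly each round. -/
lemma held_le_held_step (P : M.Prof) (S : Finset M.X) (h : M.H) :
    (M.hpref h).le (held P S h) (held P (step P S) h) := by
  rcases hy : held P S h with _ | y
  · exact hy ▸ none_le_held P (step P S) h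
  · -- y is proposed and held at `hos y.1 = h`
    have hrec := held_mem_recvd P S h
    rw [hy, mem_recvd] at hrec
    have hprop : propose P S (M.doc y.1) = some ⟨y.1, rfl⟩ := hrec.2 y rfl
    have hheld : held P S (M.hos y.1) = some ⟨y.1, rfl⟩ := by
      rw [held_ocast P S y.2.symm, hy, ocast_some]
    have hprop' := propose_step_of_held hprop hheld
    have hmem : (some y : Option (M.Xh h)) ∈ recvd P (step P S) h :=
      mem_recvd.2 ⟨hrec.1, fun z hz => by
        obtain ⟨rfl⟩ : y = z := Option.some_injective _ hz
        exact hprop'⟩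
    exact le_held hmem

lemma held_state_mono (P : M.Prof) (h : M.H) {j k : ℕ} (hjk : j ≤ k) :
    (M.hpref h).le (held P (state P j) h) (held P (state P k) h) := by
  induction k with
  | zero => cases Nat.le_zero.mp hjk; exact (M.hpref h).le_refl _
  | succ n ih =>
    rcases Nat.lt_or_ge j (n+1) with hlt | hge
    · have h1 := ih (Nat.lt_succ_iff.mp hlt)
      have h2 := held_le_held_step P (state P n) h
      rw [← state_succ] at h2
      exact (M.hpref h).le_trans _ _ _ h1 h2
    · have : j = n + 1 := le_antisymm hjk hge
      subst this; exact (M.hpref h).le_refl _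

lemma propose_state_anti (P : M.Prof) (e : M.D) {j k : ℕ} (hjk : j ≤ k) :
    (P e).le (propose P (state P k) e) (propose P (state P j) e) :=
  propose_mono (state_anti P hjk) e

/-! ### The fixed point -/

lemma exists_fix (P : M.Prof) : ∃ T, step P (state P T) = state P T := by
  by_contra hcon
  push_neg at hcon
  have hcard : ∀ k : ℕ, (state P k).card + k ≤ (Finset.univ : Finset M.X).card := by
    intro k
    induction k with
    | zero => simpa using Finset.card_le_card (Finset.subset_univ _)
    | succ n ih =>
      have hss : state P (n+1) ⊂ state P n := by
        rw [state_succ]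
        exact (Finset.ssubset_iff_subset_ne).2 ⟨step_subset _ _, hcon n⟩
      have := Finset.card_lt_card hss
      omega
  have := hcard ((Finset.univ : Finset M.X).card + 1)
  omega

/-- The terminal round. -/
noncomputable def fixT (P : M.Prof) : ℕ := (exists_fix P).choose

/-- The terminal set of surviving contracts. -/
noncomputable def Sfin (P : M.Prof) : Finset M.X := state P (fixT P)

lemma step_Sfin (P : M.Prof) : step P (Sfin P) = Sfin P := (exists_fix P).choose_spec

/-- At the end, every proposed contract is held. -/
lemma fix_no_reject {P : M.Prof} {x : M.X}
    (hprop : propose P (Sfin P) (M.doc x) = some ⟨x, rfl⟩) :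
    held P (Sfin P) (M.hos x) = some ⟨x, rfl⟩ := by
  by_contra hne
  have hxS : x ∈ Sfin P := propose_some_mem hprop
  have : x ∈ step P (Sfin P) := (step_Sfin P).symm ▸ hxS
  exact (mem_step.1 this).2 ⟨hprop, hne⟩

/-- Extraction of the rejection round for a contract not surviving. -/
lemma exists_rejection {P : M.Prof} {x : M.X} (hx : x ∉ Sfin P) :
    ∃ k, x ∈ state P k ∧ rejected P (state P k) x := by
  have h0 : x ∈ state P 0 := by simp [state]
  have : ∀ n : ℕ, x ∉ state P n → ∃ k, x ∈ state P k ∧ rejected P (state P k) x := by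
    intro n
    induction n with
    | zero => intro h; exact absurd h0 h
    | succ m ih =>
      intro hxm
      by_cases hmem : x ∈ state P m
      · refine ⟨m, hmem, ?_⟩
        by_contra hrej
        exact hxm (state_succ P m ▸ mem_step.2 ⟨hmem, hrej⟩)
      · exact ih hmem
  exact this (fixT P) hx

end Market

namespace Market

variable {M : Market}

/-! ### The deferred-acceptance allocation -/

/-- The DA allocation: all contracts proposed (equivalently, held) at the end. -/
noncomputable def muDA (P : M.Prof) : Finset M.X :=
  Finset.univ.filter (fun x => propose P (Sfin P) (M.doc x) = some ⟨x, rfl⟩)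

lemma mem_muDA {P : M.Prof} {x : M.X} :
    x ∈ muDA P ↔ propose P (Sfin P) (M.doc x) = some ⟨x, rfl⟩ := by
  simp [muDA]

lemma muDA_isAllocation (P : M.Prof) : M.IsAllocation (muDA P) := by
  intro x hx y hy hxy
  rw [mem_muDA] at hx hy
  constructor
  · intro hdoc
    apply hxy
    have hy' : propose P (Sfin P) (M.doc x) = some ⟨y, hdoc.symm⟩ := by
      rw [propose_dcast P (Sfin P) hdoc.symm, hy, dcast_some]
    rw [hx] at hy'
    exact congrArg Subtype.val (Option.some_injective _ hy')
  · intro hhos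
    apply hxy
    have hxh := fix_no_reject hx
    have hyh := fix_no_reject hy
    have hyh' : held P (Sfin P) (M.hos x) = some ⟨y, hhos.symm⟩ := by
      rw [held_ocast P (Sfin P) hhos.symm, hyh, ocast_some]
    rw [hxh] at hyh'
    exact congrArg Subtype.val (Option.some_injective _ hyh')

lemma allocD_muDA (P : M.Prof) (e : M.D) : M.allocD (muDA P) e = propose P (Sfin P) e := by
  rcases hp : propose P (Sfin P) e with _ | x
  · refine allocD_eq_none (fun y hy hyd => ?_)
    rw [mem_muDA] at hy
    rw [propose_dcast P (Sfin P) hyd, hy, dcast_some] at hp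
    exact Option.some_ne_none _ hp
  · have hx : x.1 ∈ muDA P := by
      rw [mem_muDA, propose_dcast P (Sfin P) x.2.symm, hp, dcast_some]
    have huniq : ∀ y ∈ muDA P, M.doc y = e → y = x.1 := by
      intro y hy hyd
      rw [mem_muDA] at hy
      rw [propose_dcast P (Sfin P) hyd, hy, dcast_some] at hp
      exact congrArg Subtype.val (Option.some_injective _ hp)
    rw [allocD_eq_some hx x.2 huniq]

lemma allocH_muDA (P : M.Prof) (h : M.H) : M.allocH (muDA P) h = held P (Sfin P) h := by
  rcases hp : held P (Sfin P) h with _ | y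
  · refine allocH_eq_none (fun z hz hzh => ?_)
    rw [mem_muDA] at hz
    have := fix_no_reject hz
    rw [held_ocast P (Sfin P) hzh, this, ocast_some] at hp
    exact Option.some_ne_none _ hp
  · have hrec := held_mem_recvd P (Sfin P) h
    rw [hp, mem_recvd] at hrec
    have hy : y.1 ∈ muDA P := mem_muDA.2 (hrec.2 y rfl)
    have huniq : ∀ z ∈ muDA P, M.hos z = h → z = y.1 := by
      intro z hz hzh
      rw [mem_muDA] at hz
      have := fix_no_reject hz
      rw [held_ocast P (Sfin P) hzh, this, ocast_some] at hp
      exact congrArg Subtype.val (Option.some_injective _ hp)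
    rw [allocH_eq_some hy y.2 huniq]

/-- The DA allocation is stable. -/
theorem muDA_isStable (P : M.Prof) : M.IsStable P (muDA P) := by
  refine ⟨muDA_isAllocation P, ⟨?_, ?_⟩, ?_⟩
  · intro e; rw [allocD_muDA]; exact none_le_propose P (Sfin P) e
  · intro h; rw [allocH_muDA]; exact none_le_held P (Sfin P) h
  · rintro v ⟨hvnot, hvd, hvh⟩
    rw [allocD_muDA] at hvd
    rw [allocH_muDA] at hvh
    -- v is doctor-acceptable
    have hdacc : (P (M.doc v)).le none (some ⟨v, rfl⟩) := by
      letI := P (M.doc v)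
      exact le_trans (none_le_propose P (Sfin P) (M.doc v)) (le_of_lt hvd)
    -- v is hospital-acceptable
    have hhacc : (M.hpref (M.hos v)).le none (some ⟨v, rfl⟩) := by
      letI := M.hpref (M.hos v)
      exact le_trans (none_le_held P (Sfin P) (M.hos v)) (le_of_lt hvh)
    -- v is not in the final surviving set
    have hvS : v ∉ Sfin P := by
      intro hvS
      have : (some ⟨v, rfl⟩ : Option (M.Xd (M.doc v))) ∈ cand P (Sfin P) (M.doc v) :=
        mem_cand.2 ⟨hdacc, fun z hz => by
          obtain ⟨rfl⟩ : (⟨v, rfl⟩ : M.Xd (M.doc v)) = z := Option.some_injective _ hz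
          exact hvS⟩
      have hle := le_propose this
      letI := P (M.doc v)
      exact absurd hvd (not_lt_of_ge hle)
    obtain ⟨k, hvk, hprop, hheld⟩ := exists_rejection hvS
    -- v was received at round k, hence held(k) > v, hence held(fixT) > v
    have hmem : (some ⟨v, rfl⟩ : Option (M.Xh (M.hos v))) ∈ recvd P (state P k) (M.hos v) :=
      mem_recvd.2 ⟨hhacc, fun z hz => by
        obtain ⟨rfl⟩ : (⟨v, rfl⟩ : M.Xh (M.hos v)) = z := Option.some_injective _ hz
        exact hprop⟩
    have h1 : (M.hpref (M.hos v)).le (some ⟨v, rfl⟩) (held P (state P k) (M.hos v)) :=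
      le_held hmem
    have hconst : ∀ j, state P (fixT P + j) = Sfin P := by
      intro j
      induction j with
      | zero => rfl
      | succ m ih => rw [← Nat.add_assoc, state_succ, ih, step_Sfin]
    have hkT : k ≤ fixT P := by
      by_contra hgt
      push_neg at hgt
      obtain ⟨j, rfl⟩ := Nat.exists_eq_add_of_le (le_of_lt hgt)
      rw [hconst j] at hvk
      exact hvS hvk
    have h2 := held_state_mono P (M.hos v) hkT
    letI := M.hpref (M.hos v)
    have h3 : (some ⟨v, rfl⟩ : Option (M.Xh (M.hos v))) ≤ held P (Sfin P) (M.hos v) :=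
      le_trans h1 h2
    exact absurd hvh (not_lt_of_ge h3)

/-- DA is doctor-optimal: contracts of stable allocations are never rejected. -/
lemma stable_survives (P : M.Prof) {Y : Finset M.X} (hY : M.IsStable P Y) :
    ∀ k, ∀ x ∈ Y, x ∈ state P k := by
  intro k
  induction k with
  | zero => intro x _; simp [state]
  | succ n ih =>
    intro x hxY
    have hxk : x ∈ state P n := ih x hxY
    rw [state_succ, mem_step]
    refine ⟨hxk, ?_⟩
    rintro ⟨hprop, hheld⟩
    -- x was rejected at round n: the held contract blocks Y
    -- x is hospital-acceptable since Y is IR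
    have hYx_h : M.allocH Y (M.hos x) = some ⟨x, rfl⟩ := allocH_mem_of_alloc hY.1 hxY
    have hhacc : (M.hpref (M.hos x)).le none (some ⟨x, rfl⟩) := by
      have := hY.2.1.2 (M.hos x)
      rw [hYx_h] at this
      exact this
    have hmem : (some ⟨x, rfl⟩ : Option (M.Xh (M.hos x))) ∈ recvd P (state P n) (M.hos x) :=
      mem_recvd.2 ⟨hhacc, fun z hz => by
        obtain ⟨rfl⟩ : (⟨x, rfl⟩ : M.Xh (M.hos x)) = z := Option.some_injective _ hz
        exact hprop⟩
    have h1 : (M.hpref (M.hos x)).le (some ⟨x, rfl⟩) (held P (state P n) (M.hos x)) :=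
      le_held hmem
    have hlt : (M.hpref (M.hos x)).lt (some ⟨x, rfl⟩) (held P (state P n) (M.hos x)) := by
      letI := M.hpref (M.hos x)
      exact lt_of_le_of_ne h1 (fun hEq => hheld hEq.symm)
    rcases hy : held P (state P n) (M.hos x) with _ | y
    · rw [hy] at hlt
      letI := M.hpref (M.hos x)
      exact absurd (lt_of_le_of_lt hhacc hlt) (lt_irrefl _)
    · -- y blocks Y
      rw [hy] at hlt
      have hrec := held_mem_recvd P (state P n) (M.hos x)
      rw [hy, mem_recvd] at hrec
      have hyprop : propose P (state P n) (M.doc y.1) = some ⟨y.1, rfl⟩ := hrec.2 y rfl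
      have hyx : y.1 ≠ x := by
        intro hEq
        apply hheld
        rw [hy]
        exact congrArg some (Subtype.ext hEq)
      have hynotY : y.1 ∉ Y := by
        intro hyY
        have h1 := allocH_mem_of_alloc hY.1 hyY
        have h2 : M.allocH Y (M.hos x) = some ⟨y.1, y.2⟩ := by
          rw [allocH_ocast Y y.2, h1, ocast_some]
        rw [hYx_h] at h2
        exact hyx (congrArg Subtype.val (Option.some_injective _ h2)).symm
      apply hY.2.2 y.1
      refine ⟨hynotY, ?_, ?_⟩
      · -- doctor side: y.1 beats doc y.1's allocation in Y
        have hwd : (P (M.doc y.1)).le (M.allocD Y (M.doc y.1)) (propose P (state P n) (M.doc y.1)) := by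
          rcases hw : M.allocD Y (M.doc y.1) with _ | w
          · exact hw ▸ none_le_propose P (state P n) (M.doc y.1)
          · have hwY : w.1 ∈ Y := allocD_some_mem hw
            have hwk : w.1 ∈ state P n := ih w.1 hwY
            have hwacc : (P (M.doc y.1)).le none (some w) := by
              have := hY.2.1.1 (M.doc y.1)
              rw [hw] at this
              exact this
            have : (some w : Option (M.Xd (M.doc y.1))) ∈ cand P (state P n) (M.doc y.1) :=
              mem_cand.2 ⟨hwacc, fun z hz => by
                obtain ⟨rfl⟩ : w = z := Option.some_injective _ hz
                exact hwk⟩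
            exact le_propose this
        rw [hyprop] at hwd
        letI := P (M.doc y.1)
        refine lt_of_le_of_ne hwd ?_
        intro hEq
        exact hynotY (allocD_some_mem hEq)
      · -- hospital side
        have e1 : M.hos x = M.hos y.1 := y.2.symm
        rw [allocH_ocast Y e1, hYx_h]
        have h5 : (M.hpref (M.hos y.1)).lt (ocast e1 (some ⟨x, rfl⟩)) (ocast e1 (some y)) :=
          (hpref_lt_ocast e1).2 hlt
        have h6 : ocast e1 (some y) = some ⟨y.1, rfl⟩ := by rw [ocast_some]
        exact h6 ▸ h5

/-- Doctor-optimality of DA. -/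
theorem muDA_optimal (P : M.Prof) {Y : Finset M.X} (hY : M.IsStable P Y) (e : M.D) :
    (P e).le (M.allocD Y e) (M.allocD (muDA P) e) := by
  rw [allocD_muDA]
  rcases hw : M.allocD Y e with _ | w
  · exact none_le_propose P (Sfin P) e
  · have hwY : w.1 ∈ Y := allocD_some_mem hw
    have hwS : w.1 ∈ Sfin P := stable_survives P hY (fixT P) w.1 hwY
    have hwacc : (P e).le none (some w) := by
      have := hY.2.1.1 e
      rw [hw] at this
      exact this
    exact le_propose (mem_cand.2 ⟨hwacc, fun z hz => by
      obtain ⟨rfl⟩ : w = z := Option.some_injective _ hz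
      exact hwS⟩)

end Market

namespace Market

variable {M : Market}

/-! ### Rejection rounds -/

lemma rejected_lt_held {P : M.Prof} {k : ℕ} {x : M.X}
    (hacc : (M.hpref (M.hos x)).le none (some ⟨x, rfl⟩))
    (hrej : rejected P (state P k) x) :
    (M.hpref (M.hos x)).lt (some ⟨x, rfl⟩) (held P (state P k) (M.hos x)) := by
  have hmem : (some ⟨x, rfl⟩ : Option (M.Xh (M.hos x))) ∈ recvd P (state P k) (M.hos x) :=
    mem_recvd.2 ⟨hacc, fun z hz => by
      obtain ⟨rfl⟩ : (⟨x, rfl⟩ : M.Xh (M.hos x)) = z := Option.some_injective _ hz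
      exact hrej.1⟩
  letI := M.hpref (M.hos x)
  exact lt_of_le_of_ne (le_held hmem) (fun hEq => hrej.2 hEq.symm)

lemma rejected_not_mem_succ {P : M.Prof} {k : ℕ} {x : M.X}
    (hrej : rejected P (state P k) x) : x ∉ state P (k + 1) := by
  rw [state_succ, mem_step]
  rintro ⟨-, hnot⟩
  exact hnot hrej

lemma not_mem_state_of_rejected {P : M.Prof} {k j : ℕ} {x : M.X}
    (hrej : rejected P (state P k) x) (hkj : k < j) : x ∉ state P j := by
  intro hmem
  exact rejected_not_mem_succ hrej (state_anti P hkj hmem)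

lemma rejected_mem {P : M.Prof} {k : ℕ} {x : M.X} (hrej : rejected P (state P k) x) :
    x ∈ state P k := propose_some_mem hrej.1

/-- Rejection rounds are unique. -/
lemma rejected_round_unique {P : M.Prof} {k k' : ℕ} {x : M.X}
    (h1 : rejected P (state P k) x) (h2 : rejected P (state P k') x) : k = k' := by
  rcases Nat.lt_trichotomy k k' with h | h | h
  · exact absurd (rejected_mem h2) (not_mem_state_of_rejected h1 h)
  · exact h
  · exact absurd (rejected_mem h1) (not_mem_state_of_rejected h2 h)

/-- The rejection round of a contract that does not survive. -/
noncomputable def rejRound (P : M.Prof) (x : M.X) : ℕ :=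
  if hx : x ∉ Sfin P then (exists_rejection hx).choose else 0

lemma rejRound_spec {P : M.Prof} {x : M.X} (hx : x ∉ Sfin P) :
    rejected P (state P (rejRound P x)) x := by
  rw [rejRound, dif_pos hx]
  exact (exists_rejection hx).choose_spec.2

lemma rejRound_eq {P : M.Prof} {x : M.X} {k : ℕ} (hx : x ∉ Sfin P)
    (hrej : rejected P (state P k) x) : k = rejRound P x :=
  rejected_round_unique hrej (rejRound_spec hx)

lemma rejRound_lt_fixT {P : M.Prof} {x : M.X} (hx : x ∉ Sfin P) :
    rejRound P x < fixT P := by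
  by_contra hge
  push_neg at hge
  have hconst : ∀ j, state P (fixT P + j) = Sfin P := by
    intro j
    induction j with
    | zero => rfl
    | succ m ih => rw [← Nat.add_assoc, state_succ, ih, step_Sfin]
  obtain ⟨j, hj⟩ := Nat.exists_eq_add_of_le hge
  have hmem := rejected_mem (rejRound_spec hx)
  rw [hj, hconst j] at hmem
  exact hx hmem

lemma state_fixT_add (P : M.Prof) (j : ℕ) : state P (fixT P + j) = Sfin P := by
  induction j with
  | zero => rfl
  | succ m ih => rw [← Nat.add_assoc, state_succ, ih, step_Sfin]

lemma state_of_fixT_le (P : M.Prof) {k : ℕ} (hk : fixT P ≤ k) : state P k = Sfin P := by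
  obtain ⟨j, rfl⟩ := Nat.exists_eq_add_of_le hk
  exact state_fixT_add P j

/-- A stable-ν contract of a doctor who strictly prefers ν to DA is rejected. -/
lemma nu_contract_not_survive {P : M.Prof} {ν : Finset M.X}
    (hIRd : ∀ e : M.D, (P e).le none (M.allocD ν e)) {e : M.D} {u : M.Xd e}
    (hu : M.allocD ν e = some u)
    (hlt : (P e).lt (M.allocD (muDA P) e) (M.allocD ν e)) : u.1 ∉ Sfin P := by
  intro hmem
  have hacc : (P e).le none (some u) := by
    have := hIRd e; rw [hu] at this; exact this
  have hcand : (some u : Option (M.Xd e)) ∈ cand P (Sfin P) e :=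
    mem_cand.2 ⟨hacc, fun z hz => by
      obtain ⟨rfl⟩ : u = z := Option.some_injective _ hz
      exact hmem⟩
  have h1 := le_propose hcand
  rw [allocD_muDA, hu] at hlt
  letI := P e
  exact absurd hlt (not_lt_of_ge h1)

end Market

namespace Market

variable {M : Market}

lemma ocast_inj {h h' : M.H} (e : h = h') {a b : Option (M.Xh h)}
    (hab : ocast e a = ocast e b) : a = b := by subst e; exact hab

/-- Doctor `e` strictly prefers `ν` to the DA allocation. -/
def prefersNu (P : M.Prof) (ν : Finset M.X) (e : M.D) : Prop :=
  (P e).lt (M.allocD (muDA P) e) (M.allocD ν e)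

/-- `h` is the `ν`-hospital of some doctor in `S`. -/
def nuSHosp (P : M.Prof) (ν : Finset M.X) (h : M.H) : Prop :=
  ∃ y : M.Xh h, M.allocH ν h = some y ∧ prefersNu P ν (M.doc y.1)

/-- `h` is the `μ`-hospital of some doctor in `S`. -/
def muSHosp (P : M.Prof) (ν : Finset M.X) (h : M.H) : Prop :=
  ∃ z : M.Xh h, M.allocH (muDA P) h = some z ∧ prefersNu P ν (M.doc z.1)

lemma prefersNu_nuSome {P : M.Prof} {ν : Finset M.X} {e : M.D} (he : prefersNu P ν e) :
    ∃ u : M.Xd e, M.allocD ν e = some u := by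
  rcases hu : M.allocD ν e with _ | u
  · exfalso
    have h1 : (P e).le none (M.allocD (muDA P) e) := (muDA_isStable P).2.1.1 e
    have he' := he
    rw [prefersNu, hu] at he'
    letI := P e
    exact absurd (lt_of_le_of_lt h1 he') (by simp)
  · exact ⟨u, rfl⟩

lemma prefersNu_nuSHosp {P : M.Prof} {ν : Finset M.X} (hAlloc : M.IsAllocation ν)
    {e : M.D} {u : M.Xd e} (he : prefersNu P ν e) (hu : M.allocD ν e = some u) :
    nuSHosp P ν (M.hos u.1) :=
  ⟨⟨u.1, rfl⟩, allocH_mem_of_alloc hAlloc (allocD_some_mem hu), u.2.symm ▸ he⟩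

/-- Blocking Lemma, Case 1. -/
lemma blocking_case1 (P : M.Prof) {ν : Finset M.X}
    (hAlloc : M.IsAllocation ν) (hIR : M.IndividuallyRational P ν)
    {h : M.H} (hW : nuSHosp P ν h) (hnMuS : ¬ muSHosp P ν h) :
    ∃ v : M.X, M.Blocks P ν v ∧ ¬ prefersNu P ν (M.doc v) := by
  have hμStable := muDA_isStable P
  have hμAlloc := hμStable.1
  obtain ⟨y, hy, hyS⟩ := hW
  have hyν : y.1 ∈ ν := allocH_some_mem hy
  have hνd : M.allocD ν (M.doc y.1) = some ⟨y.1, rfl⟩ := allocD_mem_of_alloc hAlloc hyν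
  have hynμ : y.1 ∉ muDA P := by
    intro hyμ
    have h1 : M.allocD (muDA P) (M.doc y.1) = some ⟨y.1, rfl⟩ :=
      allocD_mem_of_alloc hμAlloc hyμ
    have h2 := hyS
    rw [prefersNu, h1, hνd] at h2
    letI := P (M.doc y.1)
    exact absurd h2 (lt_irrefl _)
  have hdocside : (P (M.doc y.1)).lt (M.allocD (muDA P) (M.doc y.1)) (some ⟨y.1, rfl⟩) := by
    have h2 := hyS
    rwa [prefersNu, hνd] at h2
  have hhosle : (M.hpref (M.hos y.1)).le (some ⟨y.1, rfl⟩) (M.allocH (muDA P) (M.hos y.1)) := by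
    letI := M.hpref (M.hos y.1)
    exact le_of_not_gt (fun hlt => hμStable.2.2 y.1 ⟨hynμ, hdocside, hlt⟩)
  have e1 : M.hos y.1 = h := y.2
  have hhosle' : (M.hpref h).le (some y) (M.allocH (muDA P) h) := by
    have h2 := (hpref_le_ocast e1).2 hhosle
    rw [← allocH_ocast (muDA P) e1] at h2
    have h3 : ocast e1 (some ⟨y.1, rfl⟩) = some y := by rw [ocast_some]
    rwa [h3] at h2
  rcases hw : M.allocH (muDA P) h with _ | w
  · exfalso
    rw [hw] at hhosle'
    have h2 : (M.hpref h).le none (some y) := by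
      have := hIR.2 h; rwa [hy] at this
    letI := M.hpref h
    exact Option.some_ne_none _ (le_antisymm hhosle' h2 : some y = (none : Option (M.Xh h)))
  rw [hw] at hhosle'
  have hwμ : w.1 ∈ muDA P := allocH_some_mem hw
  have hwny : w ≠ y := by
    intro hEq
    rw [hEq] at hw
    exact hynμ (allocH_some_mem hw)
  have hwlt : (M.hpref h).lt (some y) (some w) := by
    letI := M.hpref h
    exact lt_of_le_of_ne hhosle' (by simpa using (Ne.symm hwny))
  have hfnS : ¬ prefersNu P ν (M.doc w.1) := fun hfS => hnMuS ⟨w, hw, hfS⟩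
  have hwμd : M.allocD (muDA P) (M.doc w.1) = some ⟨w.1, rfl⟩ :=
    allocD_mem_of_alloc hμAlloc hwμ
  have hwnν : w.1 ∉ ν := by
    intro hwv
    have h2 : M.allocH ν (M.hos w.1) = some ⟨w.1, rfl⟩ := allocH_mem_of_alloc hAlloc hwv
    have e2 : M.hos w.1 = h := w.2
    have h3 : some y = some w := by
      rw [← hy, allocH_ocast ν e2, h2, ocast_some]
    exact hwny (Option.some_injective _ h3).symm
  refine ⟨w.1, ⟨hwnν, ?_, ?_⟩, hfnS⟩
  · -- doctor side
    have hle1 : (P (M.doc w.1)).le (M.allocD ν (M.doc w.1)) (some ⟨w.1, rfl⟩) := by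
      letI := P (M.doc w.1)
      have := le_of_not_gt hfnS
      rwa [hwμd] at this
    letI := P (M.doc w.1)
    refine lt_of_le_of_ne hle1 ?_
    intro hEq
    exact hwnν (allocD_some_mem hEq)
  · -- hospital side
    have e2 : h = M.hos w.1 := w.2.symm
    rw [allocH_ocast ν e2, hy]
    have h5 := (hpref_lt_ocast e2).2 hwlt
    have h6 : ocast e2 (some w) = some ⟨w.1, rfl⟩ := by rw [ocast_some]
    rwa [h6] at h5

end Market

namespace Market

variable {M : Market}

/-- Blocking Lemma, Case 2. -/
lemma blocking_case2 (P : M.Prof) {ν : Finset M.X}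
    (hAlloc : M.IsAllocation ν) (hIR : M.IndividuallyRational P ν)
    (hS : ∃ e : M.D, prefersNu P ν e)
    (hc : ∀ h : M.H, nuSHosp P ν h → muSHosp P ν h) :
    ∃ v : M.X, M.Blocks P ν v ∧ ¬ prefersNu P ν (M.doc v) := by
  classical
  have hμStable := muDA_isStable P
  have hμAlloc := hμStable.1
  obtain ⟨e₀, he₀⟩ := hS
  obtain ⟨u₀, hu₀⟩ := prefersNu_nuSome he₀
  -- counting
  set SD : Finset M.D := Finset.univ.filter (prefersNu P ν) with hSDdef
  set WH : Finset M.H := Finset.univ.filter (nuSHosp P ν) with hWHdef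
  set MH : Finset M.H := Finset.univ.filter (muSHosp P ν) with hMHdef
  have hgν : ∀ e ∈ SD, ∃ h ∈ WH, ∀ u : M.Xd e, M.allocD ν e = some u → M.hos u.1 = h := by
    intro e he
    have heS : prefersNu P ν e := (Finset.mem_filter.1 he).2
    obtain ⟨u, hu⟩ := prefersNu_nuSome heS
    refine ⟨M.hos u.1, Finset.mem_filter.2
      ⟨Finset.mem_univ _, prefersNu_nuSHosp hAlloc heS hu⟩, ?_⟩
    intro u' hu'
    rw [hu] at hu'
    rw [Option.some_injective _ hu'.symm]
  -- use choice to get the map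
  choose fν hfν1 hfν2 using hgν
  have hinj1 : ∀ e he e' he', fν e he = fν e' he' → e = e' := by
    intro e he e' he' hEq
    have heS : prefersNu P ν e := (Finset.mem_filter.1 he).2
    have heS' : prefersNu P ν e' := (Finset.mem_filter.1 he').2
    obtain ⟨u, hu⟩ := prefersNu_nuSome heS
    obtain ⟨u', hu'⟩ := prefersNu_nuSome heS'
    rw [← hfν2 e he u hu, ← hfν2 e' he' u' hu'] at hEq
    have huu : u.1 = u'.1 := by
      by_contra hne
      exact (hAlloc u.1 (allocD_some_mem hu) u'.1 (allocD_some_mem hu') hne).2 hEq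
    rw [← u.2, ← u'.2, huu]
  have hcard1 : SD.card ≤ WH.card := by
    refine Finset.card_le_card_of_injOn
      (fun e => if he : e ∈ SD then fν e he else M.hos u₀.1) ?_ ?_
    · intro e he
      dsimp only
      rw [dif_pos (Finset.mem_coe.1 he)]
      exact hfν1 e he
    · intro e he e' he' hEq
      simp only [Finset.mem_coe] at he he'
      dsimp only at hEq
      rw [dif_pos he, dif_pos he'] at hEq
      exact hinj1 e he e' he' hEq
  have hgμ : ∀ h ∈ MH, ∃ e ∈ SD, ∀ z : M.Xh h, M.allocH (muDA P) h = some z →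
      M.doc z.1 = e := by
    intro h hh
    obtain ⟨z, hz, hzS⟩ := (Finset.mem_filter.1 hh).2
    refine ⟨M.doc z.1, Finset.mem_filter.2 ⟨Finset.mem_univ _, hzS⟩, ?_⟩
    intro z' hz'
    rw [hz] at hz'
    rw [Option.some_injective _ hz'.symm]
  choose fμ hfμ1 hfμ2 using hgμ
  have hinj2 : ∀ h hh h' hh', fμ h hh = fμ h' hh' → h = h' := by
    intro h hh h' hh' hEq
    obtain ⟨z, hz, -⟩ := (Finset.mem_filter.1 hh).2
    obtain ⟨z', hz', -⟩ := (Finset.mem_filter.1 hh').2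
    rw [← hfμ2 h hh z hz, ← hfμ2 h' hh' z' hz'] at hEq
    have hzz : z.1 = z'.1 := by
      by_contra hne
      exact (hμAlloc z.1 (allocH_some_mem hz) z'.1 (allocH_some_mem hz') hne).1 hEq
    rw [← z.2, ← z'.2, hzz]
  have hWHsubMH : WH ⊆ MH := by
    intro h hh
    exact Finset.mem_filter.2 ⟨Finset.mem_univ _, hc h (Finset.mem_filter.1 hh).2⟩
  -- the image of fμ is all of SD
  have hfμim : ∀ e ∈ SD, ∃ h, ∃ hh : h ∈ MH, fμ h hh = e := by
    by_contra hcon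
    push_neg at hcon
    obtain ⟨e1, he1, hnot⟩ := hcon
    -- then fμ maps MH into SD \ {e1}, contradicting cards
    have hmaps : ∀ h hh, fμ h hh ∈ SD.erase e1 := by
      intro h hh
      exact Finset.mem_erase.2 ⟨fun hEq => hnot h hh hEq, hfμ1 h hh⟩
    have hcard3 : MH.card ≤ (SD.erase e1).card := by
      refine Finset.card_le_card_of_injOn
        (fun h => if hh : h ∈ MH then fμ h hh else e₀) ?_ ?_
      · intro h hh
        dsimp only
        rw [dif_pos (Finset.mem_coe.1 hh)]
        exact hmaps h hh
      · intro h hh h' hh' hEq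
        simp only [Finset.mem_coe] at hh hh'
        dsimp only at hEq
        rw [dif_pos hh, dif_pos hh'] at hEq
        exact hinj2 h hh h' hh' hEq
    have hcard4 : (SD.erase e1).card < SD.card := Finset.card_erase_lt_of_mem he1
    have hcard5 : WH.card ≤ MH.card := Finset.card_le_card hWHsubMH
    omega
  have hmatched : ∀ e : M.D, prefersNu P ν e → ∃ m : M.Xd e, M.allocD (muDA P) e = some m := by
    intro e he
    obtain ⟨h, hh, hfe⟩ := hfμim e (Finset.mem_filter.2 ⟨Finset.mem_univ _, he⟩)
    obtain ⟨z, hz, -⟩ := (Finset.mem_filter.1 hh).2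
    have hge : M.doc z.1 = e := by rw [hfμ2 h hh z hz]; exact hfe
    have hzd : M.allocD (muDA P) (M.doc z.1) = some ⟨z.1, rfl⟩ :=
      allocD_mem_of_alloc hμAlloc (allocH_some_mem hz)
    exact ⟨⟨z.1, hge⟩, by rw [allocD_dcast (muDA P) hge, hzd, dcast_some]⟩
  have hMuW : ∀ (e : M.D) (m : M.Xd e), prefersNu P ν e → M.allocD (muDA P) e = some m →
      nuSHosp P ν (M.hos m.1) := by
    intro e m he hm
    have hmμ : m.1 ∈ muDA P := allocD_some_mem hm
    have hMuS : muSHosp P ν (M.hos m.1) :=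
      ⟨⟨m.1, rfl⟩, allocH_mem_of_alloc hμAlloc hmμ, m.2.symm ▸ he⟩
    have hmem : M.hos m.1 ∈ MH := Finset.mem_filter.2 ⟨Finset.mem_univ _, hMuS⟩
    have hWHeq : WH = MH := by
      apply Finset.eq_of_subset_of_card_le hWHsubMH
      -- MH.card ≤ SD.card ≤ WH.card
      have hcard3 : MH.card ≤ SD.card := by
        refine Finset.card_le_card_of_injOn
          (fun h => if hh : h ∈ MH then fμ h hh else e₀) ?_ ?_
        · intro h hh
          dsimp only
          rw [dif_pos (Finset.mem_coe.1 hh)]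
          exact hfμ1 h hh
        · intro h hh h' hh' hEq
          simp only [Finset.mem_coe] at hh hh'
          dsimp only at hEq
          rw [dif_pos hh, dif_pos hh'] at hEq
          exact hinj2 h hh h' hh' hEq
      omega
    rw [← hWHeq] at hmem
    exact (Finset.mem_filter.1 hmem).2
  -- the last rejection event
  set EC : Finset M.X := Finset.univ.filter
    (fun x => x ∉ Sfin P ∧ prefersNu P ν (M.doc x) ∧ nuSHosp P ν (M.hos x)) with hECdef
  have hECne : EC.Nonempty := by
    refine ⟨u₀.1, Finset.mem_filter.2 ⟨Finset.mem_univ _, ?_, ?_, ?_⟩⟩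
    · exact nu_contract_not_survive hIR.1 hu₀ he₀
    · exact u₀.2.symm ▸ he₀
    · exact prefersNu_nuSHosp hAlloc he₀ hu₀
  obtain ⟨ys, hysEC, hysmax⟩ := EC.exists_max_image (rejRound P) hECne
  obtain ⟨hysnf, hysS, -⟩ := (Finset.mem_filter.1 hysEC).2
  have hysrej : rejected P (state P (rejRound P ys)) ys := rejRound_spec hysnf
  have hrfix : rejRound P ys < fixT P := rejRound_lt_fixT hysnf
  obtain ⟨ms, hms⟩ := hmatched (M.doc ys) hysS
  have hmsprop : propose P (Sfin P) (M.doc ys) = some ms := by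
    rw [← allocD_muDA]; exact hms
  have hmsS : ms.1 ∈ Sfin P := propose_some_mem hmsprop
  have hmsne : ms ≠ (⟨ys, rfl⟩ : M.Xd (M.doc ys)) := by
    intro hEq
    rw [hEq] at hmsS
    exact hysnf hmsS
  have hmslt : (P (M.doc ys)).lt (some ms) (some ⟨ys, rfl⟩) := by
    have h1 := propose_state_anti P (M.doc ys) (le_of_lt hrfix)
    rw [state_of_fixT_le P (le_refl _), hmsprop, hysrej.1] at h1
    letI := P (M.doc ys)
    exact lt_of_le_of_ne h1 (by simpa using hmsne)
  -- the first round at which doc ys proposes ms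
  have hexr' : ∃ k, propose P (state P k) (M.doc ys) = some ms := by
    refine ⟨fixT P, ?_⟩
    rw [state_of_fixT_le P (le_refl _)]
    exact hmsprop
  have hr'spec : propose P (state P (Nat.find hexr')) (M.doc ys) = some ms :=
    Nat.find_spec hexr'
  set r' : ℕ := Nat.find hexr' with hr'def
  have hr'lefix : r' ≤ fixT P := Nat.find_le (by
    rw [state_of_fixT_le P (le_refl _)]; exact hmsprop)
  have hrr' : rejRound P ys < r' := by
    by_contra hle
    push_neg at hle
    have h1 := propose_state_anti P (M.doc ys) hle
    rw [hr'spec, hysrej.1] at h1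
    letI := P (M.doc ys)
    exact absurd hmslt (not_lt_of_ge h1)
  have hr'pos : 0 < r' := lt_of_le_of_lt (Nat.zero_le _) hrr'
  have hr1succ : r' - 1 + 1 = r' := Nat.succ_pred_eq_of_pos hr'pos
  -- the hospital of ms belongs to W
  have hWh : nuSHosp P ν (M.hos ms.1) := hMuW (M.doc ys) ms hysS hms
  obtain ⟨yh, hyh, hyhS⟩ := hWh
  have hνyh : M.allocD ν (M.doc yh.1) = some ⟨yh.1, rfl⟩ :=
    allocD_mem_of_alloc hAlloc (allocH_some_mem hyh)
  have hyhnf : yh.1 ∉ Sfin P := nu_contract_not_survive hIR.1 hνyh hyhS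
  have hyhEC : yh.1 ∈ EC := by
    refine Finset.mem_filter.2 ⟨Finset.mem_univ _, hyhnf, hyhS, ?_⟩
    exact yh.2.symm ▸ ⟨yh, hyh, hyhS⟩
  have hkr : rejRound P yh.1 ≤ rejRound P ys := hysmax yh.1 hyhEC
  have hkrej : rejected P (state P (rejRound P yh.1)) yh.1 := rejRound_spec hyhnf
  -- yh is hospital-acceptable
  have hyacc' : (M.hpref (M.hos ms.1)).le none (some yh) := by
    have := hIR.2 (M.hos ms.1)
    rwa [hyh] at this
  have hyacc : (M.hpref (M.hos yh.1)).le none (some ⟨yh.1, rfl⟩) := by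
    have e3 : M.hos ms.1 = M.hos yh.1 := yh.2.symm
    have h2 := (hpref_le_ocast e3).2 hyacc'
    rwa [ocast_none, ocast_some] at h2
  have hltk : (M.hpref (M.hos yh.1)).lt (some ⟨yh.1, rfl⟩)
      (held P (state P (rejRound P yh.1)) (M.hos yh.1)) := rejected_lt_held hyacc hkrej
  have hltk' : (M.hpref (M.hos ms.1)).lt (some yh)
      (held P (state P (rejRound P yh.1)) (M.hos ms.1)) := by
    have e3 : M.hos ms.1 = M.hos yh.1 := yh.2.symm
    rw [held_ocast P (state P (rejRound P yh.1)) e3] at hltk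
    have h7 : ocast e3 (some yh) = some ⟨yh.1, rfl⟩ := by rw [ocast_some]
    rw [← h7] at hltk
    exact (hpref_lt_ocast e3).1 hltk
  have hkler1 : rejRound P yh.1 ≤ r' - 1 := by omega
  have hltr1 : (M.hpref (M.hos ms.1)).lt (some yh)
      (held P (state P (r' - 1)) (M.hos ms.1)) := by
    letI := M.hpref (M.hos ms.1)
    exact lt_of_lt_of_le hltk' (held_state_mono P (M.hos ms.1) hkler1)
  -- the holder y₀ at round r' - 1
  rcases hy0 : held P (state P (r' - 1)) (M.hos ms.1) with _ | y₀
  · exfalso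
    rw [hy0] at hltr1
    letI := M.hpref (M.hos ms.1)
    exact absurd (lt_of_le_of_lt hyacc' hltr1) (by simp)
  rw [hy0] at hltr1
  have hy0rec := held_mem_recvd P (state P (r' - 1)) (M.hos ms.1)
  rw [hy0, mem_recvd] at hy0rec
  have hy0prop : propose P (state P (r' - 1)) (M.doc y₀.1) = some ⟨y₀.1, rfl⟩ :=
    hy0rec.2 y₀ rfl
  have hy0ne : y₀.1 ≠ ms.1 := by
    intro hEq
    have e4 : M.doc y₀.1 = M.doc ys := by rw [hEq]; exact ms.2
    have h5 : propose P (state P (r' - 1)) (M.doc ys) = some ms := by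
      rw [propose_dcast P (state P (r' - 1)) e4, hy0prop, dcast_some]
      exact congrArg some (Subtype.ext hEq)
    exact Nat.find_min hexr' (by omega) h5
  have hy0heldr1 : held P (state P (r' - 1)) (M.hos y₀.1) = some ⟨y₀.1, rfl⟩ := by
    have e5 : M.hos ms.1 = M.hos y₀.1 := y₀.2.symm
    rw [held_ocast P (state P (r' - 1)) e5, hy0, ocast_some]
  have hy0propr' : propose P (state P r') (M.doc y₀.1) = some ⟨y₀.1, rfl⟩ := by
    have := propose_step_of_held hy0prop hy0heldr1
    rwa [← state_succ, hr1succ] at this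
  -- ms is proposed at round r' and held at the end
  have hmsprop' : propose P (Sfin P) (M.doc ms.1) = some ⟨ms.1, rfl⟩ := by
    rw [propose_dcast P (Sfin P) ms.2.symm, hmsprop, dcast_some]
  have hheldT : held P (Sfin P) (M.hos ms.1) = some ⟨ms.1, rfl⟩ := fix_no_reject hmsprop'
  have hmsacc : (M.hpref (M.hos ms.1)).le none (some ⟨ms.1, rfl⟩) := by
    have := held_mem_recvd P (Sfin P) (M.hos ms.1)
    rw [hheldT, mem_recvd] at this
    exact this.1
  have hmspropr' : propose P (state P r') (M.doc ms.1) = some ⟨ms.1, rfl⟩ := by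
    rw [propose_dcast P (state P r') ms.2.symm, hr'spec, dcast_some]
  have hmsheldler' : (M.hpref (M.hos ms.1)).le (some ⟨ms.1, rfl⟩)
      (held P (state P r') (M.hos ms.1)) :=
    le_held (mem_recvd.2 ⟨hmsacc, fun z hz => by
      obtain ⟨rfl⟩ : (⟨ms.1, rfl⟩ : M.Xh (M.hos ms.1)) = z := Option.some_injective _ hz
      exact hmspropr'⟩)
  have hy0rej : rejected P (state P r') y₀.1 := by
    refine ⟨hy0propr', ?_⟩
    intro hEq
    have e5 : M.hos ms.1 = M.hos y₀.1 := y₀.2.symm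
    have h6 : held P (state P r') (M.hos ms.1) = some y₀ := by
      rw [held_ocast P (state P r') e5] at hEq
      have h7 : ocast e5 (some y₀) = some ⟨y₀.1, rfl⟩ := by rw [ocast_some]
      rw [← h7] at hEq
      exact ocast_inj e5 hEq
    have h8 : (M.hpref (M.hos ms.1)).le (held P (state P r') (M.hos ms.1))
        (held P (Sfin P) (M.hos ms.1)) := by
      have := held_state_mono P (M.hos ms.1) hr'lefix
      rwa [state_of_fixT_le P (le_refl _)] at this
    rw [h6, hheldT] at h8
    rw [h6] at hmsheldler'
    letI := M.hpref (M.hos ms.1)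
    have h9 : some y₀ = (some ⟨ms.1, rfl⟩ : Option (M.Xh (M.hos ms.1))) :=
      le_antisymm h8 hmsheldler'
    exact hy0ne (by simpa using congrArg (Option.map Subtype.val) h9)
  have hy0nf : y₀.1 ∉ Sfin P := by
    by_cases hcase : r' + 1 ≤ fixT P
    · intro hmem
      exact rejected_not_mem_succ hy0rej (state_anti P hcase hmem)
    · exfalso
      have hfle : r' = fixT P := by omega
      have h10 : y₀.1 ∈ state P r' := rejected_mem hy0rej
      have h11 := rejected_not_mem_succ hy0rej
      rw [hfle] at h10 h11
      rw [state_of_fixT_le P (by omega : fixT P ≤ fixT P + 1)] at h11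
      exact h11 h10
  have hfnotS : ¬ prefersNu P ν (M.doc y₀.1) := by
    intro hfS
    have hy0EC : y₀.1 ∈ EC := by
      refine Finset.mem_filter.2 ⟨Finset.mem_univ _, hy0nf, hfS, ?_⟩
      exact y₀.2.symm ▸ ⟨yh, hyh, hyhS⟩
    have h12 : rejRound P y₀.1 ≤ rejRound P ys := hysmax y₀.1 hy0EC
    have h13 : r' = rejRound P y₀.1 := rejRound_eq hy0nf hy0rej
    omega
  -- y₀.1 is the desired blocking contract
  have hy0nν : y₀.1 ∉ ν := by
    intro hmem
    have h14 : M.allocH ν (M.hos y₀.1) = some ⟨y₀.1, rfl⟩ := allocH_mem_of_alloc hAlloc hmem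
    have e5 : M.hos ms.1 = M.hos y₀.1 := y₀.2.symm
    rw [allocH_ocast ν e5, hyh] at h14
    have h7 : ocast e5 (some y₀) = some ⟨y₀.1, rfl⟩ := by rw [ocast_some]
    rw [← h7] at h14
    have h15 : yh = y₀ := Option.some_injective _ (ocast_inj e5 h14)
    rw [h15] at hltr1
    letI := M.hpref (M.hos ms.1)
    exact absurd hltr1 (lt_irrefl _)
  refine ⟨y₀.1, ⟨hy0nν, ?_, ?_⟩, hfnotS⟩
  · -- doctor side
    letI := P (M.doc y₀.1)
    have hle1 : (P (M.doc y₀.1)).le (M.allocD ν (M.doc y₀.1))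
        (M.allocD (muDA P) (M.doc y₀.1)) := le_of_not_gt hfnotS
    have hle2 : (P (M.doc y₀.1)).le (M.allocD (muDA P) (M.doc y₀.1)) (some ⟨y₀.1, rfl⟩) := by
      rw [allocD_muDA]
      have h16 := propose_state_anti P (M.doc y₀.1) (by omega : r' - 1 ≤ fixT P)
      rwa [state_of_fixT_le P (le_refl _), hy0prop] at h16
    refine lt_of_le_of_ne (le_trans hle1 hle2) ?_
    intro hEq
    exact hy0nν (allocD_some_mem hEq)
  · -- hospital side
    have e5 : M.hos ms.1 = M.hos y₀.1 := y₀.2.symm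
    rw [allocH_ocast ν e5, hyh]
    have h17 := (hpref_lt_ocast e5).2 hltr1
    have h7 : ocast e5 (some y₀) = some ⟨y₀.1, rfl⟩ := by rw [ocast_some]
    rwa [h7] at h17


end Market

namespace Market

variable {M : Market}

/-- The Blocking Lemma. -/
theorem blocking_lemma (P : M.Prof) {ν : Finset M.X}
    (hAlloc : M.IsAllocation ν) (hIR : M.IndividuallyRational P ν)
    (hS : ∃ e : M.D, prefersNu P ν e) :
    ∃ v : M.X, M.Blocks P ν v ∧ ¬ prefersNu P ν (M.doc v) := by
  by_cases hc : ∀ h : M.H, nuSHosp P ν h → muSHosp P ν h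
  · exact blocking_case2 P hAlloc hIR hS hc
  · push_neg at hc
    obtain ⟨h, hW, hnMuS⟩ := hc
    exact blocking_case1 P hAlloc hIR hW hnMuS

/-- Strategy-proofness of the DA allocation (Dubins–Freedman / Roth). -/
theorem muDA_SP (P P' : M.Prof) (d : M.D) (hsame : ∀ e : M.D, e ≠ d → P e = P' e) :
    (P d).le (M.allocD (muDA P') d) (M.allocD (muDA P) d) := by
  letI := P d
  by_contra hnle
  have hlt : (P d).lt (M.allocD (muDA P) d) (M.allocD (muDA P') d) := lt_of_not_ge hnle
  have hStable' := muDA_isStable P'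
  have hAlloc : M.IsAllocation (muDA P') := hStable'.1
  have hIR : M.IndividuallyRational P (muDA P') := by
    constructor
    · intro e
      by_cases he : e = d
      · subst he
        have h1 : (P e).le none (M.allocD (muDA P) e) := (muDA_isStable P).2.1.1 e
        exact le_trans h1 (le_of_lt hlt)
      · rw [hsame e he]
        exact hStable'.2.1.1 e
    · exact hStable'.2.1.2
  obtain ⟨v, hblocks, hnpref⟩ := blocking_lemma P hAlloc hIR ⟨d, hlt⟩
  have hvd : M.doc v ≠ d := by
    intro hEq
    rw [hEq] at hnpref
    exact hnpref hlt
  apply hStable'.2.2 v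
  refine ⟨hblocks.1, ?_, hblocks.2.2⟩
  have := hblocks.2.1
  rwa [hsame (M.doc v) hvd] at this

/-! ### The 0-quantile mechanism is the DA mechanism -/

lemma muDA_mem_stableSet (P : M.Prof) : muDA P ∈ M.stableSet P := by
  classical
  rw [stableSet]
  rw [Finset.mem_filter]
  exact ⟨Finset.mem_univ _, muDA_isStable P⟩

lemma nthBest_one (P : M.Prof) (d : M.D) :
    M.nthBest P d 1 = M.allocD (muDA P) d := by
  classical
  letI := P d
  set a : Option (M.Xd d) := M.allocD (muDA P) d with ha
  have hmem : a ∈ M.sortedStable P d := by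
    rw [sortedStable]
    rw [Multiset.mem_sort]
    exact Multiset.mem_map.2 ⟨muDA P, (muDA_mem_stableSet P), rfl⟩
  have hmax : ∀ b ∈ M.sortedStable P d, b ≤ a := by
    intro b hb
    rw [sortedStable] at hb
    rw [Multiset.mem_sort] at hb
    obtain ⟨Y, hY, rfl⟩ := Multiset.mem_map.1 hb
    have hYstable : M.IsStable P Y := by
      have : Y ∈ M.stableSet P := hY
      rw [stableSet, Finset.mem_filter] at this
      exact this.2
    exact muDA_optimal P hYstable d
  have hsorted : List.Pairwise (· ≥ ·) (M.sortedStable P d) := by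
    rw [sortedStable]
    exact Multiset.pairwise_sort _ _
  rcases hL : M.sortedStable P d with _ | ⟨b, tl⟩
  · rw [hL] at hmem
    exact absurd hmem (List.not_mem_nil)
  · rw [hL] at hmem hmax hsorted
    have hba : b = a := by
      have h1 : b ≤ a := hmax b (List.mem_cons_self)
      have h2 : a ≤ b := by
        rcases List.mem_cons.1 hmem with hEq | hmemtl
        · exact le_of_eq hEq
        · exact (List.pairwise_cons.1 hsorted).1 a hmemtl
      exact le_antisymm h1 h2
    rw [nthBest, hL]
    simp [hba]

lemma nthBest_dcast (P : M.Prof) {d d' : M.D} (e : d = d') (j : ℕ) :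
    M.nthBest P d' j = dcast e (M.nthBest P d j) := by subst e; rfl

lemma allocD_quantileAlloc (P : M.Prof) (d : M.D) (j : ℕ) :
    M.allocD (M.quantileAlloc P j) d = M.nthBest P d j := by
  classical
  rcases hn : M.nthBest P d j with _ | x
  · refine allocD_eq_none (fun y hy hyd => ?_)
    rw [quantileAlloc, Finset.mem_filter] at hy
    have h1 := hy.2
    rw [nthBest_dcast P hyd j, h1, dcast_some] at hn
    exact Option.some_ne_none _ hn
  · have hx : x.1 ∈ M.quantileAlloc P j := by
      rw [quantileAlloc, Finset.mem_filter]
      refine ⟨Finset.mem_univ _, ?_⟩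
      rw [nthBest_dcast P x.2.symm j, hn, dcast_some]
    have huniq : ∀ y ∈ M.quantileAlloc P j, M.doc y = d → y = x.1 := by
      intro y hy hyd
      rw [quantileAlloc, Finset.mem_filter] at hy
      have h1 := hy.2
      rw [nthBest_dcast P hyd j, h1, dcast_some] at hn
      exact congrArg Subtype.val (Option.some_injective _ hn)
    rw [allocD_eq_some hx x.2 huniq]

lemma quantileMech_zero (P : M.Prof) : M.quantileMech 0 P = M.quantileAlloc P 1 := by
  rw [quantileMech]
  norm_num

lemma assign_quantileMech_zero (P : M.Prof) (d : M.D) :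
    M.assign (M.quantileMech 0) P d = M.allocD (muDA P) d := by
  rw [assign, quantileMech_zero, allocD_quantileAlloc, nthBest_one]

/-- The doctor-proposing DA mechanism (the 0-quantile mechanism) is not obviously
manipulable; in fact it is strategy-proof. -/
theorem NOM_of_quantile_zero (M : Market) : M.NOM (M.quantileMech 0) := by
  rintro d Pd Pd' ⟨⟨P, hlt⟩, -⟩
  rw [assign_quantileMech_zero, assign_quantileMech_zero] at hlt
  have hsame : ∀ e : M.D, e ≠ d → (Function.update P d Pd) e = (Function.update P d Pd') e := by
    intro e he
    rw [Function.update_of_ne he, Function.update_of_ne he]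
  have hSP := muDA_SP (Function.update P d Pd) (Function.update P d Pd') d hsame
  rw [Function.update_self] at hSP
  letI := Pd
  exact absurd hlt (not_lt_of_ge hSP)

end Market

namespace Market

/-! ### Generic facts about `LinearOrder.lift'` -/

lemma lift'_le {α β : Type*} [LinearOrder β] (f : α → β) (hf : Function.Injective f)
    {a b : α} : (LinearOrder.lift' f hf).le a b ↔ f a ≤ f b := Iff.rfl

lemma lift'_lt {α β : Type*} [LinearOrder β] (f : α → β) (hf : Function.Injective f)
    {a b : α} : (LinearOrder.lift' f hf).lt a b ↔ f a < f b := by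
  constructor
  · intro h
    rcases ((LinearOrder.lift' f hf).lt_iff_le_not_ge a b).1 h with ⟨h1, h2⟩
    exact lt_of_le_not_ge (h1 : f a ≤ f b) (h2 : ¬ f b ≤ f a)
  · intro h
    exact ((LinearOrder.lift' f hf).lt_iff_le_not_ge a b).2
      ⟨(le_of_lt h : f a ≤ f b), (not_le_of_gt h : ¬ f b ≤ f a)⟩

/-! ### The counterexample market: one doctor, one hospital, `n` contracts -/

/-- hospital key: `none ↦ 0`, contract `i ↦ i + 1` (higher index preferred). -/
def hKey (n : ℕ) : Option {x : Fin n // PUnit.unit = PUnit.unit} → ℕ :=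
  fun o => o.elim 0 (fun y => (y.1.1 : ℕ) + 1)

/-- truthful doctor key: `none ↦ 0`, contract `i ↦ n - i` (lower index preferred). -/
def tKey (n : ℕ) : Option {x : Fin n // PUnit.unit = PUnit.unit} → ℕ :=
  fun o => o.elim 0 (fun y => n - (y.1.1 : ℕ))

/-- misreport doctor key: only contract `0` acceptable. -/
def mKey (n : ℕ) : Option {x : Fin n // PUnit.unit = PUnit.unit} → ℕ :=
  fun o => o.elim n (fun y => if (y.1.1 : ℕ) = 0 then n + 1 else n - 1 - (y.1.1 : ℕ))

lemma hKey_inj (n : ℕ) : Function.Injective (hKey n) := by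
  intro a b hab
  cases a with
  | none =>
    cases b with
    | none => rfl
    | some y =>
      exfalso
      have hab' : (0 : ℕ) = (y.1.1 : ℕ) + 1 := hab
      omega
  | some x =>
    cases b with
    | none =>
      exfalso
      have hab' : (x.1.1 : ℕ) + 1 = 0 := hab
      omega
    | some y =>
      have hab' : (x.1.1 : ℕ) + 1 = (y.1.1 : ℕ) + 1 := hab
      exact congrArg some (Subtype.ext (Fin.ext (by omega)))

lemma tKey_inj (n : ℕ) : Function.Injective (tKey n) := by
  intro a b hab
  cases a with
  | none =>
    cases b with
    | none => rfl
    | some y =>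
      exfalso
      have hy := y.1.2
      have hab' : (0 : ℕ) = n - (y.1.1 : ℕ) := hab
      omega
  | some x =>
    cases b with
    | none =>
      exfalso
      have hx := x.1.2
      have hab' : n - (x.1.1 : ℕ) = 0 := hab
      omega
    | some y =>
      have hx := x.1.2
      have hy := y.1.2
      have hab' : n - (x.1.1 : ℕ) = n - (y.1.1 : ℕ) := hab
      exact congrArg some (Subtype.ext (Fin.ext (by omega)))

lemma mKey_inj (n : ℕ) : Function.Injective (mKey n) := by
  intro a b hab
  cases a with
  | none =>
    cases b with
    | none => rfl
    | some y =>
      exfalso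
      have hy := y.1.2
      have hab' : n = if (y.1.1 : ℕ) = 0 then n + 1 else n - 1 - (y.1.1 : ℕ) := hab
      by_cases hb : (y.1.1 : ℕ) = 0
      · rw [if_pos hb] at hab'; omega
      · rw [if_neg hb] at hab'; omega
  | some x =>
    cases b with
    | none =>
      exfalso
      have hx := x.1.2
      have hab' : (if (x.1.1 : ℕ) = 0 then n + 1 else n - 1 - (x.1.1 : ℕ)) = n := hab
      by_cases ha : (x.1.1 : ℕ) = 0
      · rw [if_pos ha] at hab'; omega
      · rw [if_neg ha] at hab'; omega
    | some y =>
      have hx := x.1.2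
      have hy := y.1.2
      have hab' : (if (x.1.1 : ℕ) = 0 then n + 1 else n - 1 - (x.1.1 : ℕ)) =
          if (y.1.1 : ℕ) = 0 then n + 1 else n - 1 - (y.1.1 : ℕ) := hab
      refine congrArg some (Subtype.ext (Fin.ext ?_))
      by_cases ha : (x.1.1 : ℕ) = 0
      · by_cases hb : (y.1.1 : ℕ) = 0
        · omega
        · rw [if_pos ha, if_neg hb] at hab'; omega
      · by_cases hb : (y.1.1 : ℕ) = 0
        · rw [if_neg ha, if_pos hb] at hab'; omega
        · rw [if_neg ha, if_neg hb] at hab'; omega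

/-- The counterexample market. -/
@[reducible]
def CM (n : ℕ) : Market where
  X := Fin n
  D := PUnit
  H := PUnit
  fintypeX := inferInstance
  fintypeD := inferInstance
  fintypeH := inferInstance
  decEqX := inferInstance
  decEqD := inferInstance
  decEqH := inferInstance
  doc := fun _ => PUnit.unit
  hos := fun _ => PUnit.unit
  hpref := fun _ => LinearOrder.lift' (hKey n) (hKey_inj n)

end Market

namespace Market

variable {n : ℕ}

/-- Truthful preferences: contract `0` best, then `1`, ..., all acceptable. -/
noncomputable def Pt (n : ℕ) : (CM n).Prof :=
  fun _ => LinearOrder.lift' (tKey n) (tKey_inj n)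

/-- Misreport: only contract `0` acceptable. -/
noncomputable def Pm (n : ℕ) : (CM n).Prof :=
  fun _ => LinearOrder.lift' (mKey n) (mKey_inj n)

lemma CM_allocD_singleton (i : Fin n) (d : (CM n).D) :
    (CM n).allocD {i} d = some ⟨i, rfl⟩ :=
  allocD_eq_some (Finset.mem_singleton_self i) rfl
    (fun y hy _ => Finset.mem_singleton.1 hy)

lemma CM_allocH_singleton (i : Fin n) (h : (CM n).H) :
    (CM n).allocH {i} h = some ⟨i, rfl⟩ :=
  allocH_eq_some (Finset.mem_singleton_self i) rfl
    (fun y hy _ => Finset.mem_singleton.1 hy)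

lemma CM_allocD_empty (d : (CM n).D) : (CM n).allocD ∅ d = none :=
  allocD_eq_none (fun y hy => absurd hy (Finset.notMem_empty y))

lemma CM_allocH_empty (h : (CM n).H) : (CM n).allocH ∅ h = none :=
  allocH_eq_none (fun y hy => absurd hy (Finset.notMem_empty y))

lemma CM_singleton_isAllocation (i : Fin n) : (CM n).IsAllocation {i} := by
  intro x hx y hy hne
  rw [Finset.mem_singleton] at hx hy
  exact absurd (hx.trans hy.symm) hne

lemma CM_stable_eq_singleton {Y : Finset (Fin n)}
    (hY : (CM n).IsAllocation Y) {x : Fin n} (hx : x ∈ Y) : Y = {x} := by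
  apply Finset.eq_singleton_iff_unique_mem.2
  refine ⟨hx, fun y hy => ?_⟩
  by_contra hne
  exact (hY y hy x hx hne).1 rfl

/-- The stable set under the truthful preference. -/
lemma CM_stableSet_Pt (hn : 2 ≤ n) :
    (CM n).stableSet (Pt n) = Finset.univ.image (fun i : Fin n => ({i} : Finset (Fin n))) := by
  classical
  ext Y
  rw [stableSet, Finset.mem_filter]
  constructor
  · rintro ⟨-, hAl, -, hnb⟩
    have hne : Y.Nonempty := by
      by_contra hemp
      rw [Finset.not_nonempty_iff_eq_empty] at hemp
      subst hemp
      refine hnb ⟨0, by omega⟩ ⟨Finset.notMem_empty _, ?_, ?_⟩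
      · rw [CM_allocD_empty]
        refine (lift'_lt (tKey n) (tKey_inj n)).2 ?_
        show (0 : ℕ) < n - 0
        omega
      · rw [CM_allocH_empty]
        refine (lift'_lt (hKey n) (hKey_inj n)).2 ?_
        show (0 : ℕ) < (0 : ℕ) + 1
        omega
    obtain ⟨x, hx⟩ := hne
    exact Finset.mem_image.2 ⟨x, Finset.mem_univ _, (CM_stable_eq_singleton hAl hx).symm⟩
  · intro hY
    obtain ⟨i, -, rfl⟩ := Finset.mem_image.1 hY
    refine ⟨Finset.mem_univ _, CM_singleton_isAllocation i, ⟨?_, ?_⟩, ?_⟩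
    · intro d
      rw [CM_allocD_singleton]
      refine (lift'_le (tKey n) (tKey_inj n)).2 ?_
      show (0 : ℕ) ≤ n - (i : ℕ)
      omega
    · intro h
      rw [CM_allocH_singleton]
      refine (lift'_le (hKey n) (hKey_inj n)).2 ?_
      show (0 : ℕ) ≤ (i : ℕ) + 1
      omega
    · rintro x ⟨hnx, hd, hh⟩
      have hxi : x ≠ i := fun hEq => hnx (hEq ▸ Finset.mem_singleton_self i)
      rw [CM_allocD_singleton] at hd
      rw [CM_allocH_singleton] at hh
      have hd' : n - (i : ℕ) < n - (Fin.val x) := (lift'_lt (tKey n) (tKey_inj n)).1 hd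
      have hh' : (i : ℕ) + 1 < (Fin.val x) + 1 := (lift'_lt (hKey n) (hKey_inj n)).1 hh
      have hix := i.2
      have hxx := (Fin.val x).lt_or_ge n
      omega

/-- The stable set under the misreport. -/
lemma CM_stableSet_Pm (hn : 2 ≤ n) :
    (CM n).stableSet (Pm n) = {({(⟨0, by omega⟩ : Fin n)} : Finset (Fin n))} := by
  classical
  ext Y
  rw [stableSet, Finset.mem_filter, Finset.mem_singleton]
  constructor
  · rintro ⟨-, hAl, ⟨hIRd, -⟩, hnb⟩
    have hne : Y.Nonempty := by
      by_contra hemp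
      rw [Finset.not_nonempty_iff_eq_empty] at hemp
      subst hemp
      refine hnb ⟨0, by omega⟩ ⟨Finset.notMem_empty _, ?_, ?_⟩
      · rw [CM_allocD_empty]
        refine (lift'_lt (mKey n) (mKey_inj n)).2 ?_
        show (n : ℕ) < if ((0 : ℕ)) = 0 then n + 1 else n - 1 - 0
        rw [if_pos rfl]
        omega
      · rw [CM_allocH_empty]
        refine (lift'_lt (hKey n) (hKey_inj n)).2 ?_
        show (0 : ℕ) < (0 : ℕ) + 1
        omega
    obtain ⟨x, hx⟩ := hne
    have hYx : Y = {x} := CM_stable_eq_singleton hAl hx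
    subst hYx
    have hIR := hIRd PUnit.unit
    rw [CM_allocD_singleton] at hIR
    have hIR' : (n : ℕ) ≤ if (Fin.val x) = 0 then n + 1 else n - 1 - (Fin.val x) :=
      (lift'_le (mKey n) (mKey_inj n)).1 hIR
    have hx0 : (Fin.val x) = 0 := by
      by_contra hne0
      rw [if_neg hne0] at hIR'
      omega
    congr 1
    exact Fin.ext hx0
  · rintro rfl
    refine ⟨Finset.mem_univ _, CM_singleton_isAllocation _, ⟨?_, ?_⟩, ?_⟩
    · intro d
      rw [CM_allocD_singleton]
      refine (lift'_le (mKey n) (mKey_inj n)).2 ?_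
      show (n : ℕ) ≤ if ((0 : ℕ)) = 0 then n + 1 else n - 1 - 0
      rw [if_pos rfl]
      omega
    · intro h
      rw [CM_allocH_singleton]
      refine (lift'_le (hKey n) (hKey_inj n)).2 ?_
      show (0 : ℕ) ≤ (0 : ℕ) + 1
      omega
    · rintro x ⟨hnx, hd, -⟩
      have hxi : (Fin.val x) ≠ 0 := by
        intro hEq
        exact hnx (by
          rw [Finset.mem_singleton]
          exact Fin.ext hEq)
      rw [CM_allocD_singleton] at hd
      have hd' : (if ((0:ℕ)) = 0 then n + 1 else n - 1 - 0) <
          if (Fin.val x) = 0 then n + 1 else n - 1 - (Fin.val x) :=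
        (lift'_lt (mKey n) (mKey_inj n)).1 hd
      rw [if_pos rfl, if_neg hxi] at hd'
      omega

end Market

namespace Market

variable {n : ℕ}

lemma CM_card_Pt (hn : 2 ≤ n) : ((CM n).stableSet (Pt n)).card = n := by
  rw [CM_stableSet_Pt hn, Finset.card_image_of_injective _ Finset.singleton_injective,
    Finset.card_univ]
  exact Fintype.card_fin n

lemma CM_card_Pm (hn : 2 ≤ n) : ((CM n).stableSet (Pm n)).card = 1 := by
  rw [CM_stableSet_Pm hn]
  exact Finset.card_singleton _

lemma CM_sortedStable_Pt (hn : 2 ≤ n) (d : (CM n).D) :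
    (CM n).sortedStable (Pt n) d =
      (List.finRange n).map (fun i => (some ⟨i, rfl⟩ : Option ((CM n).Xd d))) := by
  letI := Pt n d
  have hval : ((CM n).stableSet (Pt n)).val =
      Multiset.map (fun i : Fin n => ({i} : Finset (Fin n))) Finset.univ.val := by
    rw [CM_stableSet_Pt hn, Finset.image_val]
    exact Multiset.dedup_eq_self.2 (Finset.univ.nodup.map Finset.singleton_injective)
  have hmul : ((CM n).stableSet (Pt n)).val.map (fun Y => (CM n).allocD Y d) =
      ((List.finRange n).map (fun i => (some ⟨i, rfl⟩ : Option ((CM n).Xd d))) : List _) := by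
    rw [hval, Multiset.map_map]
    rw [Fin.univ_def]
    show Multiset.map ((fun Y => (CM n).allocD Y d) ∘ fun i => ({i} : Finset (Fin n)))
        (↑(List.finRange n)) =
      ↑(List.map (fun i => (some ⟨i, rfl⟩ : Option ((CM n).Xd d))) (List.finRange n))
    rw [Multiset.map_coe]
    rw [Multiset.coe_eq_coe]
    apply List.Perm.of_eq
    apply List.map_congr_left
    intro i _
    show (CM n).allocD {i} d = some ⟨i, rfl⟩
    exact CM_allocD_singleton i d
  refine (fun hp h1 h2 => List.Perm.eq_of_pairwise (le := fun a b => (Pt n d).le b a)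
    (fun _ _ _ _ h h' => (Pt n d).le_antisymm _ _ h' h) h1 h2 hp) ?_ ?_ ?_
  · rw [← Multiset.coe_eq_coe]
    rw [sortedStable]
    rw [Multiset.sort_eq]
    exact hmul
  · rw [sortedStable]
    exact Multiset.pairwise_sort _ _
  · rw [List.pairwise_map]
    apply (List.pairwise_lt_finRange n).imp
    intro a b hab
    show (Pt n d).le (some ⟨b, rfl⟩) (some ⟨a, rfl⟩)
    refine (lift'_le (tKey n) (tKey_inj n)).2 ?_
    show n - (b : ℕ) ≤ n - (a : ℕ)
    omega

lemma CM_nthBest_Pt (hn : 2 ≤ n) (d : (CM n).D) {j : ℕ} (h1j : 1 ≤ j) (hjn : j ≤ n) :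
    (CM n).nthBest (Pt n) d j = some ⟨⟨j - 1, by omega⟩, rfl⟩ := by
  rw [nthBest, CM_sortedStable_Pt hn]
  rw [List.getElem?_map]
  rw [List.getElem?_eq_getElem (by rw [List.length_finRange]; omega)]
  have hlen : j - 1 < (List.finRange n).length := by
    rw [List.length_finRange]; omega
  show (some ⟨(List.finRange n)[j-1]'hlen, rfl⟩ :
    Option ((CM n).Xd d)) = some ⟨⟨j - 1, by omega⟩, rfl⟩
  congr 1
  apply Subtype.ext
  apply Fin.ext
  simp [List.getElem_finRange]

lemma CM_sortedStable_Pm (hn : 2 ≤ n) (d : (CM n).D) :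
    (CM n).sortedStable (Pm n) d =
      [(some ⟨⟨0, by omega⟩, rfl⟩ : Option ((CM n).Xd d))] := by
  letI := Pm n d
  refine (fun hp h1 h2 => List.Perm.eq_of_pairwise (le := fun a b => (Pm n d).le b a)
    (fun _ _ _ _ h h' => (Pm n d).le_antisymm _ _ h' h) h1 h2 hp) ?_ ?_ ?_
  · rw [← Multiset.coe_eq_coe]
    rw [sortedStable]
    rw [Multiset.sort_eq]
    rw [CM_stableSet_Pm hn]
    show Multiset.map _ ({({(⟨0, by omega⟩ : Fin n)} : Finset (Fin n))} : Finset _).val = _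
    rw [Finset.singleton_val, Multiset.map_singleton]
    rw [CM_allocD_singleton]
    rfl
  · rw [sortedStable]
    exact Multiset.pairwise_sort _ _
  · exact List.pairwise_singleton _ _

lemma CM_nthBest_Pm (hn : 2 ≤ n) (d : (CM n).D) :
    (CM n).nthBest (Pm n) d 1 = some ⟨⟨0, by omega⟩, rfl⟩ := by
  rw [nthBest, CM_sortedStable_Pm hn]
  rfl

end Market

namespace Market

variable {n : ℕ}

lemma CM_assign_Pt (hn : 2 ≤ n) {q : ℝ} (hq1 : q ≤ 1) (hnq : 1 < (n : ℝ) * q)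
    (d : (CM n).D) :
    (CM n).assign ((CM n).quantileMech q) (Pt n) d =
      some ⟨⟨⌈(n : ℝ) * q⌉₊ - 1, by
        have : ⌈(n : ℝ) * q⌉₊ ≤ n := Nat.ceil_le.2 (by
          calc (n : ℝ) * q ≤ (n : ℝ) * 1 := by
                have : (0:ℝ) ≤ (n:ℝ) := by positivity
                nlinarith
            _ = n := by ring)
        omega⟩, rfl⟩ := by
  rw [assign, quantileMech]
  have hceil2 : 2 ≤ ⌈((CM n).stableSet (Pt n)).card * q⌉₊ := by
    rw [CM_card_Pt hn]
    have : 1 < ⌈(n : ℝ) * q⌉₊ := Nat.lt_ceil.2 (by exact_mod_cast hnq)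
    omega
  have hmax : max 1 ⌈(((CM n).stableSet (Pt n)).card : ℝ) * q⌉₊ =
      ⌈(n : ℝ) * q⌉₊ := by
    rw [CM_card_Pt hn]
    rw [CM_card_Pt hn] at hceil2
    omega
  rw [hmax, allocD_quantileAlloc]
  have h1j : 1 ≤ ⌈(n : ℝ) * q⌉₊ := by
    rw [CM_card_Pt hn] at hceil2
    omega
  have hjn : ⌈(n : ℝ) * q⌉₊ ≤ n := Nat.ceil_le.2 (by
    calc (n : ℝ) * q ≤ (n : ℝ) * 1 := by
          have : (0:ℝ) ≤ (n:ℝ) := by positivity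
          nlinarith
      _ = n := by ring)
  exact CM_nthBest_Pt hn d h1j hjn

lemma CM_assign_Pm (hn : 2 ≤ n) {q : ℝ} (hq1 : q ≤ 1) (d : (CM n).D) :
    (CM n).assign ((CM n).quantileMech q) (Pm n) d = some ⟨⟨0, by omega⟩, rfl⟩ := by
  rw [assign, quantileMech]
  have hmax : max 1 ⌈(((CM n).stableSet (Pm n)).card : ℝ) * q⌉₊ = 1 := by
    rw [CM_card_Pm hn]
    have : ⌈(1 : ℝ) * q⌉₊ ≤ 1 := Nat.ceil_le.2 (by push_cast; nlinarith)
    push_cast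
    push_cast at this
    omega
  rw [hmax, allocD_quantileAlloc]
  exact CM_nthBest_Pm hn d

lemma CM_update (P R : (CM n).Prof) :
    Function.update P PUnit.unit (R PUnit.unit) = R := by
  funext e
  cases e
  exact Function.update_self _ _ _

/-- For `q ∈ (1/n, 1]`, the `q`-quantile mechanism is obviously manipulable
in the market `CM n`. -/
theorem CM_not_NOM (hn : 2 ≤ n) (q : ℝ) (hq1 : q ≤ 1) (hnq : 1 < (n : ℝ) * q) :
    ¬ (CM n).NOM ((CM n).quantileMech q) := by
  intro hNOM
  set φ := (CM n).quantileMech q with hφ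
  set d : (CM n).D := PUnit.unit with hd
  have hjn : ⌈(n : ℝ) * q⌉₊ ≤ n := Nat.ceil_le.2 (by
    calc (n : ℝ) * q ≤ (n : ℝ) * 1 := by
          have : (0:ℝ) ≤ (n:ℝ) := by positivity
          nlinarith
      _ = n := by ring)
  have hj2 : 2 ≤ ⌈(n : ℝ) * q⌉₊ := by
    have : 1 < ⌈(n : ℝ) * q⌉₊ := Nat.lt_ceil.2 (by exact_mod_cast hnq)
    omega
  -- outcome values
  have hvalT : ∀ P : (CM n).Prof,
      (CM n).assign φ (Function.update P d (Pt n d)) d =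
        some ⟨⟨⌈(n : ℝ) * q⌉₊ - 1, by omega⟩, rfl⟩ := by
    intro P
    rw [show Function.update P d (Pt n d) = Pt n from CM_update P (Pt n)]
    exact CM_assign_Pt hn hq1 hnq d
  have hvalM : ∀ P : (CM n).Prof,
      (CM n).assign φ (Function.update P d (Pm n d)) d = some ⟨⟨0, by omega⟩, rfl⟩ := by
    intro P
    rw [show Function.update P d (Pm n d) = Pm n from CM_update P (Pm n)]
    exact CM_assign_Pm hn hq1 d
  have hlt : (Pt n d).lt (some ⟨⟨⌈(n : ℝ) * q⌉₊ - 1, by omega⟩, rfl⟩)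
      (some ⟨⟨0, by omega⟩, rfl⟩) := by
    refine (lift'_lt (tKey n) (tKey_inj n)).2 ?_
    show n - (⌈(n : ℝ) * q⌉₊ - 1) < n - 0
    omega
  apply hNOM d (Pt n d) (Pm n d)
  constructor
  · -- it is a manipulation
    exact ⟨Pt n, by rw [hvalT (Pt n), hvalM (Pt n)]; exact hlt⟩
  · -- the best case strictly improves
    right
    refine ⟨some ⟨⟨0, by omega⟩, rfl⟩, some ⟨⟨⌈(n : ℝ) * q⌉₊ - 1, by omega⟩, rfl⟩,
      ⟨⟨Pt n, (hvalM (Pt n)).symm⟩, ?_⟩, ⟨⟨Pt n, (hvalT (Pt n)).symm⟩, ?_⟩, hlt⟩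
    · rintro b ⟨P, rfl⟩
      rw [hvalM P]
      exact (Pt n d).le_refl _
    · rintro b ⟨P, rfl⟩
      rw [hvalT P]
      exact (Pt n d).le_refl _

end Market




/-- For every real `q ∈ [0,1]`, the `q`-quantile stable mechanism `φ^q`
is not obviously manipulable (in every one-to-one matching market with contracts)
if and only if `q = 0`, i.e. iff `φ^q` is the doctor-proposing deferred-acceptance
mechanism. -/
theorem quantile_NOM_iff_doctorDA (q : ℝ) (hq0 : 0 ≤ q) (hq1 : q ≤ 1) :
    (∀ M : Market, M.NOM (M.quantileMech q)) ↔ q = 0 := by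
  constructor
  · intro hall
    by_contra hq
    have hqpos : 0 < q := lt_of_le_of_ne hq0 (Ne.symm hq)
    set n : ℕ := ⌈1/q⌉₊ + 1 with hn
    have hn2 : 2 ≤ n := by
      have h1 : 1 ≤ ⌈1/q⌉₊ := Nat.one_le_ceil_iff.2 (by positivity)
      omega
    have hnq : 1 < (n : ℝ) * q := by
      have h1 : 1/q ≤ (⌈1/q⌉₊ : ℝ) := Nat.le_ceil _
      have h3 : ((⌈1/q⌉₊ : ℕ) : ℝ) + 1 ≤ (n : ℝ) := by
        rw [hn]; push_cast; linarith
      have h4 : 1/q * q = 1 := by field_simp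
      nlinarith
    exact Market.CM_not_NOM hn2 q hq1 hnq (hall (Market.CM n))
  · rintro rfl
    exact fun M => Market.NOM_of_quantile_zero M
end

section
/- For every real number q ∈ (0,1], the q-quantile stable mechanism φ^q is obviously manipulable: there exist a one-to-one matching market with contracts, a doctor d, a true preference P_d, and a preference P_d′ such that P_d′ is an obvious manipulation of φ^q at P_d. -/
namespace QOM

/-- Doctor's true preference key: `x₀ > x₁ > ⋯ > x_{n-1} > ∅`. -/
def fT (n : ℕ) {p : Fin n → Prop} : Option {x : Fin n // p x} → ℕ :=
  fun o => o.elim 0 (fun x => n - x.1.val)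

/-- Doctor's lying preference key: `x₀ > ∅ > x₁ > ⋯`. -/
def fL (n : ℕ) {p : Fin n → Prop} : Option {x : Fin n // p x} → ℕ :=
  fun o => o.elim n (fun x => if x.1.val = 0 then n + 1 else n - x.1.val)

/-- Hospital preference key: `x_{n-1} > ⋯ > x₀ > ∅`. -/
def fH (n : ℕ) {p : Fin n → Prop} : Option {x : Fin n // p x} → ℕ :=
  fun o => o.elim 0 (fun x => x.1.val + 1)

lemma fT_inj (n : ℕ) {p : Fin n → Prop} : Function.Injective (fT n (p := p)) := by
  rintro (_ | x) (_ | y) h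
  · rfl
  · exfalso; have := y.1.isLt; simp only [fT, Option.elim] at h; omega
  · exfalso; have := x.1.isLt; simp only [fT, Option.elim] at h; omega
  · have hx := x.1.isLt; have hy := y.1.isLt
    simp only [fT, Option.elim] at h
    exact congrArg some (Subtype.ext (Fin.ext (by omega)))

lemma fL_inj (n : ℕ) {p : Fin n → Prop} : Function.Injective (fL n (p := p)) := by
  rintro (_ | x) (_ | y) h
  · rfl
  · exfalso; have := y.1.isLt; simp only [fL, Option.elim] at h
    split_ifs at h <;> omega
  · exfalso; have := x.1.isLt; simp only [fL, Option.elim] at h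
    split_ifs at h <;> omega
  · have hx := x.1.isLt; have hy := y.1.isLt
    simp only [fL, Option.elim] at h
    split_ifs at h <;>
      exact congrArg some (Subtype.ext (Fin.ext (by omega)))

lemma fH_inj (n : ℕ) {p : Fin n → Prop} : Function.Injective (fH n (p := p)) := by
  rintro (_ | x) (_ | y) h
  · rfl
  · exfalso; simp only [fH, Option.elim] at h; omega
  · exfalso; simp only [fH, Option.elim] at h; omega
  · simp only [fH, Option.elim] at h
    exact congrArg some (Subtype.ext (Fin.ext (by omega)))

/-- The market: `n` contracts between a single doctor and a single hospital. -/
@[reducible] def Mk (n : ℕ) : Market where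
  X := Fin n
  D := Unit
  H := Unit
  doc := fun _ => ()
  hos := fun _ => ()
  hpref := fun _ => LinearOrder.lift' (fH n) (fH_inj n)

/-- The doctor's true preference. -/
def prefT (n : ℕ) : (Mk n).DocPref () := LinearOrder.lift' (fT n) (fT_inj n)

/-- The doctor's manipulation. -/
def prefL (n : ℕ) : (Mk n).DocPref () := LinearOrder.lift' (fL n) (fL_inj n)

lemma prefT_le {n : ℕ} (a b : Option ((Mk n).Xd ())) :
    (prefT n).le a b ↔ fT n a ≤ fT n b := Iff.rfl

lemma prefT_lt {n : ℕ} (a b : Option ((Mk n).Xd ())) :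
    (prefT n).lt a b ↔ fT n a < fT n b := Iff.rfl

lemma prefL_le {n : ℕ} (a b : Option ((Mk n).Xd ())) :
    (prefL n).le a b ↔ fL n a ≤ fL n b := Iff.rfl

lemma prefL_lt {n : ℕ} (a b : Option ((Mk n).Xd ())) :
    (prefL n).lt a b ↔ fL n a < fL n b := Iff.rfl

lemma hpref_le {n : ℕ} (a b : Option ((Mk n).Xh ())) :
    ((Mk n).hpref ()).le a b ↔ fH n a ≤ fH n b := Iff.rfl

lemma hpref_lt {n : ℕ} (a b : Option ((Mk n).Xh ())) :
    ((Mk n).hpref ()).lt a b ↔ fH n a < fH n b := Iff.rfl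

lemma allocD_empty (n : ℕ) (d : (Mk n).D) : (Mk n).allocD ∅ d = none := by
  unfold Market.allocD
  rw [dif_neg]
  simp

lemma allocH_empty (n : ℕ) (h : (Mk n).H) : (Mk n).allocH ∅ h = none := by
  unfold Market.allocH
  rw [dif_neg]
  simp

lemma allocD_singleton (n : ℕ) (i : Fin n) :
    (Mk n).allocD {i} () = some ⟨i, rfl⟩ := by
  have h : ∃ x ∈ ({i} : Finset (Fin n)), (Mk n).doc x = () :=
    ⟨i, Finset.mem_singleton_self i, rfl⟩
  unfold Market.allocD
  split
  · next h2 => exact congrArg some (Subtype.ext (Finset.mem_singleton.mp h2.choose_spec.1))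
  · next h2 => exact absurd h h2

lemma allocH_singleton (n : ℕ) (i : Fin n) :
    (Mk n).allocH {i} () = some ⟨i, rfl⟩ := by
  have h : ∃ x ∈ ({i} : Finset (Fin n)), (Mk n).hos x = () :=
    ⟨i, Finset.mem_singleton_self i, rfl⟩
  unfold Market.allocH
  split
  · next h2 => exact congrArg some (Subtype.ext (Finset.mem_singleton.mp h2.choose_spec.1))
  · next h2 => exact absurd h h2

lemma mem_stableSet_iff (n : ℕ) (P : (Mk n).Prof) (Y : Finset (Fin n)) :
    Y ∈ (Mk n).stableSet P ↔ (Mk n).IsStable P Y := by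
  classical
  unfold Market.stableSet
  rw [Finset.mem_filter]
  simp

lemma alloc_eq_singleton {n : ℕ} {Y : Finset (Fin n)} (hY : (Mk n).IsAllocation Y)
    {i : Fin n} (hi : i ∈ Y) : Y = {i} := by
  refine Finset.eq_singleton_iff_unique_mem.mpr ⟨hi, fun j hj => ?_⟩
  by_contra hne
  exact (hY j hj i hi hne).1 rfl

lemma singleton_alloc (n : ℕ) (i : Fin n) : (Mk n).IsAllocation {i} := by
  intro x hx y hy hxy
  rw [Finset.mem_singleton] at hx hy
  exact absurd (hx.trans hy.symm) hxy

lemma stable_truth (n : ℕ) (i : Fin n) :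
    (Mk n).IsStable (fun _ => prefT n) {i} := by
  refine ⟨singleton_alloc n i, ⟨?_, ?_⟩, ?_⟩
  · intro d; cases d
    rw [allocD_singleton]
    exact (prefT_le _ _).mpr (Nat.zero_le _)
  · intro h; cases h
    rw [allocH_singleton]
    exact (hpref_le _ _).mpr (Nat.zero_le _)
  · rintro x ⟨-, hd, hh⟩
    have hd' : (prefT n).lt ((Mk n).allocD {i} ()) (some ⟨x, rfl⟩) := hd
    have hh' : ((Mk n).hpref ()).lt ((Mk n).allocH {i} ()) (some ⟨x, rfl⟩) := hh
    rw [allocD_singleton, prefT_lt] at hd'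
    rw [allocH_singleton, hpref_lt] at hh'
    simp only [fT, fH, Option.elim] at hd' hh'
    have := x.isLt
    have := i.isLt
    omega

lemma stable_truth_only (n : ℕ) (hn : 0 < n) (Y : Finset (Fin n))
    (h : (Mk n).IsStable (fun _ => prefT n) Y) : ∃ i : Fin n, Y = {i} := by
  rcases Finset.eq_empty_or_nonempty Y with rfl | ⟨i, hi⟩
  · exfalso
    apply h.2.2 ⟨0, hn⟩
    refine ⟨by simp, ?_, ?_⟩
    · show (prefT n).lt ((Mk n).allocD ∅ ()) (some ⟨⟨0, hn⟩, rfl⟩)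
      rw [allocD_empty, prefT_lt]
      simp only [fT, Option.elim]
      omega
    · show ((Mk n).hpref ()).lt ((Mk n).allocH ∅ ()) (some ⟨⟨0, hn⟩, rfl⟩)
      rw [allocH_empty, hpref_lt]
      simp only [fH, Option.elim]
      omega
  · exact ⟨i, alloc_eq_singleton h.1 hi⟩

lemma stable_lie (n : ℕ) (hn : 0 < n) :
    (Mk n).IsStable (fun _ => prefL n) {(⟨0, hn⟩ : Fin n)} := by
  refine ⟨singleton_alloc n _, ⟨?_, ?_⟩, ?_⟩
  · intro d; cases d
    rw [allocD_singleton]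
    rw [prefL_le]
    simp [fL]
  · intro h; cases h
    rw [allocH_singleton]
    exact (hpref_le _ _).mpr (Nat.zero_le _)
  · rintro x ⟨-, hd, -⟩
    have hd' : (prefL n).lt ((Mk n).allocD {(⟨0, hn⟩ : Fin n)} ()) (some ⟨x, rfl⟩) := hd
    rw [allocD_singleton, prefL_lt] at hd'
    simp only [fL, Option.elim] at hd'
    have := x.isLt
    split_ifs at hd' <;> omega

lemma stable_lie_only (n : ℕ) (hn : 0 < n) (Y : Finset (Fin n))
    (h : (Mk n).IsStable (fun _ => prefL n) Y) : Y = {(⟨0, hn⟩ : Fin n)} := by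
  rcases Finset.eq_empty_or_nonempty Y with rfl | ⟨i, hi⟩
  · exfalso
    apply h.2.2 ⟨0, hn⟩
    refine ⟨by simp, ?_, ?_⟩
    · show (prefL n).lt ((Mk n).allocD ∅ ()) (some ⟨⟨0, hn⟩, rfl⟩)
      rw [allocD_empty, prefL_lt]
      simp [fL]
    · show ((Mk n).hpref ()).lt ((Mk n).allocH ∅ ()) (some ⟨⟨0, hn⟩, rfl⟩)
      rw [allocH_empty, hpref_lt]
      simp only [fH, Option.elim]
      omega
  · have hY : Y = {i} := alloc_eq_singleton h.1 hi
    subst hY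
    have hIR : (prefL n).le none ((Mk n).allocD {i} ()) := h.2.1.1 ()
    rw [allocD_singleton, prefL_le] at hIR
    simp only [fL, Option.elim] at hIR
    have := i.isLt
    have hi0 : i.val = 0 := by by_contra h0; rw [if_neg h0] at hIR; omega
    congr 1
    exact Fin.ext hi0

lemma stableSet_truth (n : ℕ) (hn : 0 < n) :
    (Mk n).stableSet (fun _ => prefT n) =
      Finset.map ⟨fun i : Fin n => ({i} : Finset (Fin n)),
        fun a b h => Finset.singleton_injective h⟩ Finset.univ := by
  ext Y
  rw [mem_stableSet_iff]
  simp only [Finset.mem_map, Finset.mem_univ, true_and, Function.Embedding.coeFn_mk]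
  constructor
  · intro h
    obtain ⟨i, rfl⟩ := stable_truth_only n hn Y h
    exact ⟨i, rfl⟩
  · rintro ⟨i, rfl⟩
    exact stable_truth n i

lemma stableSet_lie (n : ℕ) (hn : 0 < n) :
    (Mk n).stableSet (fun _ => prefL n) = {({(⟨0, hn⟩ : Fin n)} : Finset (Fin n))} := by
  ext Y
  rw [mem_stableSet_iff, Finset.mem_singleton]
  constructor
  · exact stable_lie_only n hn Y
  · rintro rfl
    exact stable_lie n hn

lemma sortedStable_truth (n : ℕ) (hn : 0 < n) :
    (Mk n).sortedStable (fun _ => prefT n) () =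
      List.ofFn (fun i : Fin n => (some ⟨i, rfl⟩ : Option ((Mk n).Xd ()))) := by
  unfold Market.sortedStable
  letI := prefT n
  have hset : ((Mk n).stableSet (fun _ => prefT n)).val.map
      (fun Y => (Mk n).allocD Y ()) =
      ↑(List.ofFn (fun i : Fin n => (some ⟨i, rfl⟩ : Option ((Mk n).Xd ())))) := by
    rw [stableSet_truth n hn, Finset.map_val, Multiset.map_map]
    simp only [Function.comp_def, Function.Embedding.coeFn_mk, Fin.univ_val_map]
    exact congrArg _ (congrArg List.ofFn (funext fun x => allocD_singleton n x))
  refine (fun hp hs => List.Perm.eq_of_pairwise' (Multiset.pairwise_sort _ _) hs hp)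
    (Multiset.coe_eq_coe.mp ?_) ?_
  · rw [Multiset.sort_eq, hset]
  · rw [List.pairwise_ofFn]
    intro i j hij
    show (prefT n).le (some ⟨j, rfl⟩) (some ⟨i, rfl⟩)
    rw [prefT_le]
    simp only [fT, Option.elim]
    have := j.isLt
    exact Nat.sub_le_sub_left (le_of_lt hij) n

lemma sortedStable_lie (n : ℕ) (hn : 0 < n) :
    (Mk n).sortedStable (fun _ => prefL n) () =
      [(some ⟨⟨0, hn⟩, rfl⟩ : Option ((Mk n).Xd ()))] := by
  unfold Market.sortedStable
  letI := prefL n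
  have hset : ((Mk n).stableSet (fun _ => prefL n)).val.map
      (fun Y => (Mk n).allocD Y ()) =
      ↑[(some ⟨⟨0, hn⟩, rfl⟩ : Option ((Mk n).Xd ()))] := by
    rw [stableSet_lie n hn]
    simp only [Finset.singleton_val, Multiset.map_singleton, Multiset.coe_singleton]
    exact congrArg (fun o => ({o} : Multiset _)) (allocD_singleton n ⟨0, hn⟩)
  refine (fun hp hs => List.Perm.eq_of_pairwise' (Multiset.pairwise_sort _ _) hs hp)
    (Multiset.coe_eq_coe.mp ?_) ?_
  · rw [Multiset.sort_eq, hset]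
  · exact List.pairwise_singleton _ _

lemma nthBest_truth (n : ℕ) (hn : 0 < n) (j : ℕ) (hj1 : 1 ≤ j) (hjn : j ≤ n) :
    (Mk n).nthBest (fun _ => prefT n) () j =
      some ⟨⟨j - 1, by omega⟩, rfl⟩ := by
  unfold Market.nthBest
  rw [sortedStable_truth n hn]
  rw [List.getElem?_eq_getElem (by rw [List.length_ofFn]; omega)]
  rw [List.getElem_ofFn]
  simp

lemma nthBest_lie (n : ℕ) (hn : 0 < n) :
    (Mk n).nthBest (fun _ => prefL n) () 1 = some ⟨⟨0, hn⟩, rfl⟩ := by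
  unfold Market.nthBest
  rw [sortedStable_lie n hn]
  simp

lemma quantileAlloc_truth (n : ℕ) (hn : 0 < n) (j : ℕ) (hj1 : 1 ≤ j) (hjn : j ≤ n) :
    (Mk n).quantileAlloc (fun _ => prefT n) j = {(⟨j - 1, by omega⟩ : Fin n)} := by
  ext x
  unfold Market.quantileAlloc
  rw [Finset.mem_filter, Finset.mem_singleton]
  constructor
  · rintro ⟨-, h⟩
    have h2 : (Mk n).nthBest (fun _ => prefT n) () j = some ⟨x, rfl⟩ := h
    rw [nthBest_truth n hn j hj1 hjn] at h2
    have := congrArg (fun o => Option.map Subtype.val o) h2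
    simpa using this.symm
  · rintro rfl
    refine ⟨Finset.mem_univ _, ?_⟩
    show (Mk n).nthBest (fun _ => prefT n) () j = some ⟨_, rfl⟩
    rw [nthBest_truth n hn j hj1 hjn]
  
lemma quantileAlloc_lie (n : ℕ) (hn : 0 < n) :
    (Mk n).quantileAlloc (fun _ => prefL n) 1 = {(⟨0, hn⟩ : Fin n)} := by
  ext x
  unfold Market.quantileAlloc
  rw [Finset.mem_filter, Finset.mem_singleton]
  constructor
  · rintro ⟨-, h⟩
    have h2 : (Mk n).nthBest (fun _ => prefL n) () 1 = some ⟨x, rfl⟩ := h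
    rw [nthBest_lie n hn] at h2
    have := congrArg (fun o => Option.map Subtype.val o) h2
    simpa using this.symm
  · rintro rfl
    refine ⟨Finset.mem_univ _, ?_⟩
    show (Mk n).nthBest (fun _ => prefL n) () 1 = some ⟨_, rfl⟩
    rw [nthBest_lie n hn]

lemma update_unit (n : ℕ) (P : (Mk n).Prof) (Pd : (Mk n).DocPref ()) :
    Function.update P () Pd = fun _ => Pd := by
  funext u
  cases u
  simp

lemma optionSet_eq (n : ℕ) (phi : (Mk n).Mech) (Pd : (Mk n).DocPref ()) :
    (Mk n).optionSet phi () Pd = {(Mk n).assign phi (fun _ => Pd) ()} := by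
  ext o
  simp only [Market.optionSet, Set.mem_setOf_eq, Set.mem_singleton_iff]
  constructor
  · rintro ⟨P, rfl⟩
    rw [update_unit]
  · intro h
    exact ⟨fun _ => Pd, by rw [update_unit]; exact h⟩

lemma assign_truth (n : ℕ) (hn : 0 < n) (q : ℝ) (hq1 : q ≤ 1)
    (hnq : 1 < (n : ℝ) * q) :
    (Mk n).assign ((Mk n).quantileMech q) (fun _ => prefT n) () =
      some ⟨⟨⌈(n : ℝ) * q⌉₊ - 1, by
        have hle : ⌈(n : ℝ) * q⌉₊ ≤ n := Nat.ceil_le.mpr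
          (by nlinarith [hq1, (Nat.cast_nonneg n : (0:ℝ) ≤ (n:ℝ))])
        have h2 : 1 < ⌈(n : ℝ) * q⌉₊ := Nat.lt_ceil.mpr (by push_cast; exact hnq)
        omega⟩, rfl⟩ := by
  have hcard : ((Mk n).stableSet (fun _ => prefT n)).card = n := by
    rw [stableSet_truth n hn, Finset.card_map, Finset.card_univ, Fintype.card_fin]
  have hle : ⌈(n : ℝ) * q⌉₊ ≤ n := Nat.ceil_le.mpr
    (by nlinarith [hq1, (Nat.cast_nonneg n : (0:ℝ) ≤ (n:ℝ))])
  have h2 : 1 < ⌈(n : ℝ) * q⌉₊ := Nat.lt_ceil.mpr (by push_cast; exact hnq)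
  unfold Market.assign Market.quantileMech
  rw [hcard]
  rw [max_eq_right (by omega)]
  rw [quantileAlloc_truth n hn _ (by omega) hle]
  rw [allocD_singleton]

lemma assign_lie (n : ℕ) (hn : 0 < n) (q : ℝ) (hq0 : 0 < q) (hq1 : q ≤ 1) :
    (Mk n).assign ((Mk n).quantileMech q) (fun _ => prefL n) () =
      some ⟨⟨0, hn⟩, rfl⟩ := by
  have hcard : ((Mk n).stableSet (fun _ => prefL n)).card = 1 := by
    rw [stableSet_lie n hn, Finset.card_singleton]
  have hceil : ⌈((1 : ℕ) : ℝ) * q⌉₊ ≤ 1 := Nat.ceil_le.mpr (by simp; linarith)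
  unfold Market.assign Market.quantileMech
  rw [hcard]
  rw [max_eq_left hceil]
  rw [quantileAlloc_lie n hn]
  rw [allocD_singleton]

end QOM


/-- For every real `q ∈ (0,1]`, the `q`-quantile stable mechanism `φ^q`
is obviously manipulable: there exist a one-to-one matching market with contracts,
a doctor `d`, a true preference `Pd`, and a preference `Pd'` such that `Pd'` is an
obvious manipulation of `φ^q` at `Pd`. -/
theorem quantile_obviously_manipulable (q : ℝ) (hq0 : 0 < q) (hq1 : q ≤ 1) :
    ∃ (M : Market) (d : M.D) (Pd Pd' : M.DocPref d),
      M.IsObviousManipulation (M.quantileMech q) d Pd Pd' := by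
  obtain ⟨n, hn, hnq⟩ : ∃ n : ℕ, 0 < n ∧ 1 < (n : ℝ) * q := by
    refine ⟨⌈1/q⌉₊ + 1, Nat.succ_pos _, ?_⟩
    have h1 : 1/q ≤ (⌈1/q⌉₊ : ℝ) := Nat.le_ceil _
    have h2 : (1:ℝ)/q < ((⌈1/q⌉₊ + 1 : ℕ) : ℝ) := by push_cast; linarith
    calc (1:ℝ) = (1/q) * q := by field_simp
    _ < ((⌈1/q⌉₊ + 1 : ℕ) : ℝ) * q := mul_lt_mul_of_pos_right h2 hq0
  have h2j : 1 < ⌈(n : ℝ) * q⌉₊ := Nat.lt_ceil.mpr (by push_cast; exact hnq)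
  have hjn : ⌈(n : ℝ) * q⌉₊ ≤ n := Nat.ceil_le.mpr
    (by nlinarith [(Nat.cast_nonneg n : (0:ℝ) ≤ (n:ℝ))])
  refine ⟨QOM.Mk n, (), QOM.prefT n, QOM.prefL n, ?_, ?_⟩
  · refine ⟨fun _ => QOM.prefT n, ?_⟩
    rw [QOM.update_unit, QOM.update_unit]
    rw [QOM.assign_truth n hn q hq1 hnq, QOM.assign_lie n hn q hq0 hq1]
    rw [QOM.prefT_lt]
    simp [QOM.fT]
    omega
  · left
    refine ⟨some ⟨⟨0, hn⟩, rfl⟩, some ⟨⟨⌈(n : ℝ) * q⌉₊ - 1, by omega⟩, rfl⟩, ?_, ?_, ?_⟩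
    · rw [QOM.optionSet_eq, QOM.assign_lie n hn q hq0 hq1]
      refine ⟨rfl, fun b hb => ?_⟩
      rw [Set.mem_singleton_iff] at hb
      subst hb
      exact (QOM.prefT_le _ _).mpr (le_refl _)
    · rw [QOM.optionSet_eq, QOM.assign_truth n hn q hq1 hnq]
      refine ⟨rfl, fun b hb => ?_⟩
      rw [Set.mem_singleton_iff] at hb
      subst hb
      exact (QOM.prefT_le _ _).mpr (le_refl _)
    · rw [QOM.prefT_lt]
      simp [QOM.fT]
      omega
end

section
/- In the market M_k, if the preference P2 of doctor d2 ranks w above ∅ (w is acceptable), then the set of stable allocations under the profile (P1, P2) is exactly {{x^t, w} : t = 1, …, k}. -/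
namespace MkMarket

/-- Doctor map for the market `M_k`: contracts `x^t` (encoded `Sum.inl t`) belong to
doctor `d1 = false`; contract `w` (encoded `Sum.inr ()`) belongs to doctor `d2 = true`. -/
def mdoc (k : ℕ) : (Fin k ⊕ Unit) → Bool := Sum.elim (fun _ => false) (fun _ => true)

/-- Hospital map for the market `M_k`: each `x^t` involves hospital `h1 = false`
and `w` involves hospital `h2 = true`. -/
def mhos (k : ℕ) : (Fin k ⊕ Unit) → Bool := Sum.elim (fun _ => false) (fun _ => true)

/-- Ranking realizing the fixed hospital preferences of `M_k`:
`h1` ranks `x^k P x^{k-1} P … P x^1 P ∅`, and `h2` ranks `w P ∅`. -/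
def hrank (k : ℕ) (h : Bool) : Option {x : Fin k ⊕ Unit // mhos k x = h} → ℕ
  | none => 0
  | some ⟨Sum.inl t, _⟩ => t.val + 1
  | some ⟨Sum.inr _, _⟩ => 1

lemma hrank_injective (k : ℕ) (h : Bool) : Function.Injective (hrank k h) := by
  rintro (_ | ⟨(t | u), hx⟩) (_ | ⟨(s | v), hy⟩) hab <;>
    simp only [hrank] at hab
  · rfl
  · omega
  · exact absurd hab (by omega)
  · omega
  · have : t = s := Fin.ext (by omega)
    subst this; rfl
  · exact Bool.noConfusion (hx.trans hy.symm)
  · exact absurd hab (by omega)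
  · exact Bool.noConfusion (hy.trans hx.symm)
  · rfl

/-- The market `M_k` of the proof of the Theorem: doctors `d1 = false`, `d2 = true`,
hospitals `h1 = false`, `h2 = true`, contracts `x^1, …, x^k` (encoded as `Sum.inl 0, …,
Sum.inl (k-1)`) between `d1` and `h1`, and `w` (encoded `Sum.inr ()`) between `d2` and `h2`;
hospital preferences: `x^k P … P x^1 P ∅` for `h1` and `w P ∅` for `h2`. -/
def Mk (k : ℕ) : Market where
  X := Fin k ⊕ Unit
  D := Bool
  H := Bool
  doc := mdoc k
  hos := mhos k
  hpref h := LinearOrder.lift' (hrank k h) (hrank_injective k h)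

/-- The contract `x^{t+1}` of `M_k`, viewed as a contract of doctor `d1 = false`. -/
def xC (k : ℕ) (t : Fin k) : (Mk k).Xd false := ⟨Sum.inl t, rfl⟩

/-- The contract `w` of `M_k`, viewed as a contract of doctor `d2 = true`. -/
def wC (k : ℕ) : (Mk k).Xd true := ⟨Sum.inr (), rfl⟩

/-- Ranking realizing `d1`'s true preference `P1 = x^1, x^2, …, x^k` (then ∅). -/
def drank1 (k : ℕ) : Option ((Mk k).Xd false) → ℕ
  | none => 0
  | some ⟨Sum.inl t, _⟩ => k - t.val
  | some ⟨Sum.inr _, _⟩ => 0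

lemma drank1_injective (k : ℕ) : Function.Injective (drank1 k) := by
  rintro (_ | ⟨(t | u), hx⟩) (_ | ⟨(s | v), hy⟩) hab <;>
    simp only [drank1] at hab
  · rfl
  · have := s.isLt; omega
  · exact Bool.noConfusion hy
  · have := t.isLt; omega
  · have h1 := t.isLt; have h2 := s.isLt
    have : t = s := Fin.ext (by omega)
    subst this; rfl
  · exact Bool.noConfusion hy
  · exact Bool.noConfusion hx
  · exact Bool.noConfusion hx
  · exact Bool.noConfusion hx

/-- `d1`'s true preference `P1`: `x^1 P x^2 P … P x^k P ∅`. -/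
def P1 (k : ℕ) : (Mk k).DocPref false :=
  LinearOrder.lift' (drank1 k) (drank1_injective k)

/-- `Q` is the truncated preference `P1'` of `d1`: it ranks `x^1 P ∅` and declares
every other contract unacceptable (`∅ P x^t` for all `t ≠ 1`). -/
def IsTruncation (k : ℕ) (hk : 0 < k) (Q : (Mk k).DocPref false) : Prop :=
  Q.lt none (some (xC k ⟨0, hk⟩)) ∧
    ∀ t : Fin k, t.val ≠ 0 → Q.lt (some (xC k t)) none

/-- Ranking realizing the truncated preference `P1' = x^1` (then ∅, then the rest). -/
def drank1' (k : ℕ) : Option ((Mk k).Xd false) → ℕ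
  | none => k
  | some ⟨Sum.inl t, _⟩ => if t.val = 0 then k + 1 else k - t.val
  | some ⟨Sum.inr _, _⟩ => 0

lemma drank1'_injective (k : ℕ) : Function.Injective (drank1' k) := by
  rintro (_ | ⟨(t | u), hx⟩) (_ | ⟨(s | v), hy⟩) hab <;>
    simp only [drank1'] at hab
  · rfl
  · have := s.isLt; split_ifs at hab <;> omega
  · exact Bool.noConfusion hy
  · have := t.isLt; split_ifs at hab <;> omega
  · have h1 := t.isLt; have h2 := s.isLt
    have : t = s := Fin.ext (by split_ifs at hab <;> omega)
    subst this; rfl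
  · exact Bool.noConfusion hy
  · exact Bool.noConfusion hx
  · exact Bool.noConfusion hx
  · exact Bool.noConfusion hx

/-- A concrete realization of the truncated preference `P1'`. -/
def P1' (k : ℕ) : (Mk k).DocPref false :=
  LinearOrder.lift' (drank1' k) (drank1'_injective k)

/-- The profile `(Q1, Q2)` of doctor preferences in `M_k`. -/
def prof (k : ℕ) (Q1 : (Mk k).DocPref false) (Q2 : (Mk k).DocPref true) : (Mk k).Prof :=
  fun d => match d with
  | false => Q1
  | true => Q2

end MkMarket

namespace MkAux

open Market

lemma allocD_eq_some {M : Market} {Y : Finset M.X} (hY : M.IsAllocation Y)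
    {x : M.X} (hx : x ∈ Y) : M.allocD Y (M.doc x) = some ⟨x, rfl⟩ := by
  have hex : ∃ z ∈ Y, M.doc z = M.doc x := ⟨x, hx, rfl⟩
  rw [Market.allocD, dif_pos hex]
  have h1 := hex.choose_spec.1
  have h2 := hex.choose_spec.2
  have hcx : hex.choose = x := by
    by_contra hne
    exact (hY _ h1 _ hx hne).1 h2
  simp only [Option.some.injEq]
  exact Subtype.ext hcx

lemma allocH_eq_some {M : Market} {Y : Finset M.X} (hY : M.IsAllocation Y)
    {x : M.X} (hx : x ∈ Y) : M.allocH Y (M.hos x) = some ⟨x, rfl⟩ := by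
  have hex : ∃ z ∈ Y, M.hos z = M.hos x := ⟨x, hx, rfl⟩
  rw [Market.allocH, dif_pos hex]
  have h1 := hex.choose_spec.1
  have h2 := hex.choose_spec.2
  have hcx : hex.choose = x := by
    by_contra hne
    exact (hY _ h1 _ hx hne).2 h2
  simp only [Option.some.injEq]
  exact Subtype.ext hcx

lemma allocD_eq_none {M : Market} {Y : Finset M.X} {d : M.D}
    (h : ¬ ∃ x ∈ Y, M.doc x = d) : M.allocD Y d = none := by
  rw [Market.allocD, dif_neg h]

lemma allocH_eq_none {M : Market} {Y : Finset M.X} {h : M.H}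
    (hh : ¬ ∃ x ∈ Y, M.hos x = h) : M.allocH Y h = none := by
  rw [Market.allocH, dif_neg hh]

end MkAux

open MkMarket MkAux in
/-- In the market `M_k`, if the preference `P2` of doctor `d2` ranks
`w` above ∅ (i.e. `w` is acceptable), then the set of stable allocations under the
profile `(P1, P2)` is exactly `{{x^t, w} : t = 1, …, k}`. -/
theorem stable_allocations_w_acceptable (k : ℕ) (hk : 2 ≤ k)
    (P2 : (Mk k).DocPref true) (hP2 : P2.lt none (some (wC k))) :
    ∀ Y : Finset ((Mk k).X),
      (Mk k).IsStable (prof k (P1 k) P2) Y ↔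
        ∃ t : Fin k, Y = {Sum.inl t, Sum.inr ()} := by
  intro Y
  constructor
  · rintro ⟨hA, hIR, hNB⟩
    -- Step 1: `w ∈ Y`.
    have hw : (Sum.inr () : (Mk k).X) ∈ Y := by
      by_contra hw
      apply hNB (Sum.inr ())
      refine ⟨hw, ?_, ?_⟩
      · have hd : (Mk k).allocD Y ((Mk k).doc (Sum.inr ())) = none := by
          apply allocD_eq_none
          rintro ⟨(s | u), hx, hdoc⟩
          · exact Bool.noConfusion hdoc
          · cases u; exact hw hx
        rw [hd]; exact hP2
      · have hh : (Mk k).allocH Y ((Mk k).hos (Sum.inr ())) = none := by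
          apply allocH_eq_none
          rintro ⟨(s | u), hx, hhos⟩
          · exact Bool.noConfusion hhos
          · cases u; exact hw hx
        rw [hh]
        show hrank k true none < hrank k true (some ⟨Sum.inr (), rfl⟩)
        simp [hrank]
    -- Step 2: some `x^t ∈ Y`.
    have hx0 : ∃ t : Fin k, (Sum.inl t : (Mk k).X) ∈ Y := by
      by_contra hne
      push_neg at hne
      apply hNB (Sum.inl ⟨0, by omega⟩)
      refine ⟨hne _, ?_, ?_⟩
      · have hd : (Mk k).allocD Y ((Mk k).doc (Sum.inl ⟨0, by omega⟩)) = none := by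
          apply allocD_eq_none
          rintro ⟨(s | u), hx, hdoc⟩
          · exact hne s hx
          · exact Bool.noConfusion hdoc
        rw [hd]
        show drank1 k none < drank1 k (some ⟨Sum.inl ⟨0, by omega⟩, rfl⟩)
        simp [drank1]; omega
      · have hh : (Mk k).allocH Y ((Mk k).hos (Sum.inl ⟨0, by omega⟩)) = none := by
          apply allocH_eq_none
          rintro ⟨(s | u), hx, hhos⟩
          · exact hne s hx
          · exact Bool.noConfusion hhos
        rw [hh]
        show hrank k false none < hrank k false (some ⟨Sum.inl ⟨0, by omega⟩, rfl⟩)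
        simp [hrank]
    obtain ⟨t, ht⟩ := hx0
    refine ⟨t, ?_⟩
    ext y
    refine Iff.trans ?_ (Finset.mem_insert.trans (or_congr Iff.rfl Finset.mem_singleton)).symm
    constructor
    · intro hy
      rcases y with (s | u)
      · left
        by_contra hne
        exact (hA _ hy _ ht hne).1 rfl
      · cases u; right; rfl
    · rintro (rfl | rfl)
      · exact ht
      · exact hw
  · rintro ⟨t, rfl⟩
    set Y : Finset ((Mk k).X) := {Sum.inl t, Sum.inr ()} with hYdef
    have hin : (Sum.inl t : (Mk k).X) ∈ Y := Finset.mem_insert_self _ _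
    have hinr : (Sum.inr () : (Mk k).X) ∈ Y := by
      exact Finset.mem_insert_of_mem (Finset.mem_singleton_self _)
    have hA : (Mk k).IsAllocation Y := by
      intro x hx y hy hne
      simp only [hYdef, Finset.mem_insert, Finset.mem_singleton] at hx hy
      replace hx := (Finset.mem_insert.mp hx).imp_right Finset.mem_singleton.mp
      replace hy := (Finset.mem_insert.mp hy).imp_right Finset.mem_singleton.mp
      rcases hx with rfl | rfl <;> rcases hy with rfl | rfl
      · exact absurd rfl hne
      · exact ⟨Bool.noConfusion, Bool.noConfusion⟩
      · exact ⟨fun h => Bool.noConfusion h.symm, fun h => Bool.noConfusion h.symm⟩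
      · exact absurd rfl hne
    have hD1 : (Mk k).allocD Y ((Mk k).doc (Sum.inl t)) = some ⟨Sum.inl t, rfl⟩ :=
      allocD_eq_some hA hin
    have hD2 : (Mk k).allocD Y ((Mk k).doc (Sum.inr ())) = some ⟨Sum.inr (), rfl⟩ :=
      allocD_eq_some hA hinr
    have hH1 : (Mk k).allocH Y ((Mk k).hos (Sum.inl t)) = some ⟨Sum.inl t, rfl⟩ :=
      allocH_eq_some hA hin
    have hH2 : (Mk k).allocH Y ((Mk k).hos (Sum.inr ())) = some ⟨Sum.inr (), rfl⟩ :=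
      allocH_eq_some hA hinr
    refine ⟨hA, ⟨?_, ?_⟩, ?_⟩
    · intro d
      cases d
      · rw [show (Mk k).allocD Y false = some ⟨Sum.inl t, rfl⟩ from hD1]
        show drank1 k none ≤ drank1 k (some ⟨Sum.inl t, rfl⟩)
        exact Nat.zero_le _
      · rw [show (Mk k).allocD Y true = some ⟨Sum.inr (), rfl⟩ from hD2]
        exact le_of_lt hP2
    · intro h
      cases h
      · rw [show (Mk k).allocH Y false = some ⟨Sum.inl t, rfl⟩ from hH1]
        show hrank k false none ≤ hrank k false (some ⟨Sum.inl t, rfl⟩)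
        exact Nat.zero_le _
      · rw [show (Mk k).allocH Y true = some ⟨Sum.inr (), rfl⟩ from hH2]
        show hrank k true none ≤ hrank k true (some ⟨Sum.inr (), rfl⟩)
        exact Nat.zero_le _
    · rintro (s | u) ⟨hnot, hd, hh⟩
      · rw [show (Mk k).allocD Y ((Mk k).doc (Sum.inl s)) = some ⟨Sum.inl t, rfl⟩ from hD1]
          at hd
        rw [show (Mk k).allocH Y ((Mk k).hos (Sum.inl s)) = some ⟨Sum.inl t, rfl⟩ from hH1]
          at hh
        have hd' : k - t.val < k - s.val := hd
        have hh' : t.val + 1 < s.val + 1 := hh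
        have h1 := t.isLt
        have h2 := s.isLt
        omega
      · cases u; exact hnot hinr
end
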